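/- arXiv:2407.17285 — 5 statements merged into one kernel-verified Lean document; each statement's English description precedes it below -/
import Mathlib

section
/- Let x̄ ∈ F be a feasible point of (MPSC). Then the tangent cone of the feasible set is the union of the tangent cones of the branch feasible sets: T_F(x̄) = ⋃_{(β1,β2)∈P(I_GH)} T_{F_(β1,β2)}(x̄). -/
open Set Filter Topology Metric

noncomputable section

namespace MPSC

abbrev Vec (n : ℕ) := EuclideanSpace ℝ (Fin n)

variable {n m p l : ℕ}

open scoped Classical in
/-- Sum of a function over an index set (finite ambient type). -/
noncomputable def sumOver {α β : Type*} [Fintype α] [AddCommMonoid β]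
    (S : Set α) (v : α → β) : β :=
  ∑ a, if a ∈ S then v a else 0

/-- The feasible set of (MPSC). -/
def Feas (g : Fin m → Vec n → ℝ) (h : Fin p → Vec n → ℝ)
    (G H : Fin l → Vec n → ℝ) : Set (Vec n) :=
  {x | (∀ i, g i x ≤ 0) ∧ (∀ j, h j x = 0) ∧ ∀ k, G k x * H k x = 0}

/-- Index set of active inequality constraints. -/
def Ig (g : Fin m → Vec n → ℝ) (xb : Vec n) : Set (Fin m) := {i | g i xb = 0}

def IG (G H : Fin l → Vec n → ℝ) (xb : Vec n) : Set (Fin l) :=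
  {k | G k xb = 0 ∧ H k xb ≠ 0}

def IH (G H : Fin l → Vec n → ℝ) (xb : Vec n) : Set (Fin l) :=
  {k | G k xb ≠ 0 ∧ H k xb = 0}

def IGH (G H : Fin l → Vec n → ℝ) (xb : Vec n) : Set (Fin l) :=
  {k | G k xb = 0 ∧ H k xb = 0}

/-- (β1, β2) is a disjoint bipartition of I_GH. -/
def Partition (G H : Fin l → Vec n → ℝ) (xb : Vec n) (β1 β2 : Set (Fin l)) : Prop :=
  β1 ∩ β2 = ∅ ∧ β1 ∪ β2 = IGH G H xb

/-- Branch feasible set. -/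
def BranchFeas (g : Fin m → Vec n → ℝ) (h : Fin p → Vec n → ℝ)
    (G H : Fin l → Vec n → ℝ) (xb : Vec n) (β1 β2 : Set (Fin l)) : Set (Vec n) :=
  {x | (∀ i, g i x ≤ 0) ∧ (∀ j, h j x = 0) ∧
    (∀ k ∈ IG G H xb ∪ β1, G k x = 0) ∧ ∀ k ∈ IH G H xb ∪ β2, H k x = 0}

/-- Bouligand tangent cone, as defined in the paper. -/
def tangentCone (Ω : Set (Vec n)) (xb : Vec n) : Set (Vec n) :=
  {d | ∃ t : ℕ → ℝ, ∃ x : ℕ → Vec n, (∀ k, 0 ≤ t k) ∧ (∀ k, x k ∈ Ω) ∧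
    Tendsto x atTop (nhds xb) ∧ Tendsto (fun k => t k • (x k - xb)) atTop (nhds d)}

/-- MPSC linearization cone. -/
def LCone (g : Fin m → Vec n → ℝ) (h : Fin p → Vec n → ℝ)
    (G H : Fin l → Vec n → ℝ) (xb : Vec n) : Set (Vec n) :=
  {d | (∀ i ∈ Ig g xb, fderiv ℝ (g i) xb d ≤ 0) ∧ (∀ j, fderiv ℝ (h j) xb d = 0) ∧
    (∀ k ∈ IG G H xb, fderiv ℝ (G k) xb d = 0) ∧ (∀ k ∈ IH G H xb, fderiv ℝ (H k) xb d = 0) ∧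
    ∀ k ∈ IGH G H xb, fderiv ℝ (G k) xb d * fderiv ℝ (H k) xb d = 0}

/-- Branch linearization cone. -/
def BranchLCone (g : Fin m → Vec n → ℝ) (h : Fin p → Vec n → ℝ)
    (G H : Fin l → Vec n → ℝ) (xb : Vec n) (β1 β2 : Set (Fin l)) : Set (Vec n) :=
  {d | (∀ i ∈ Ig g xb, fderiv ℝ (g i) xb d ≤ 0) ∧ (∀ j, fderiv ℝ (h j) xb d = 0) ∧
    (∀ k ∈ IG G H xb ∪ β1, fderiv ℝ (G k) xb d = 0) ∧
    ∀ k ∈ IH G H xb ∪ β2, fderiv ℝ (H k) xb d = 0}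

/-- MPSC critical subspace. -/
def CritSubspace (g : Fin m → Vec n → ℝ) (h : Fin p → Vec n → ℝ)
    (G H : Fin l → Vec n → ℝ) (xb : Vec n) : Set (Vec n) :=
  {d | (∀ i ∈ Ig g xb, fderiv ℝ (g i) xb d = 0) ∧ (∀ j, fderiv ℝ (h j) xb d = 0) ∧
    (∀ k ∈ IG G H xb ∪ IGH G H xb, fderiv ℝ (G k) xb d = 0) ∧
    ∀ k ∈ IH G H xb ∪ IGH G H xb, fderiv ℝ (H k) xb d = 0}

/-- Rank (dimension of the span) of the family of gradients
{∇g_i(x)}_{i∈I1} ∪ {∇h_j(x)}_j ∪ {∇G_k(x)}_{k∈I3} ∪ {∇H_k(x)}_{k∈I4}. -/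
def gradRank (g : Fin m → Vec n → ℝ) (h : Fin p → Vec n → ℝ)
    (G H : Fin l → Vec n → ℝ) (I1 : Set (Fin m)) (I3 I4 : Set (Fin l)) (x : Vec n) : ℕ :=
  Module.finrank ℝ ↥(Submodule.span ℝ
    ((fun i => gradient (g i) x) '' I1 ∪ Set.range (fun j => gradient (h j) x) ∪
     (fun k => gradient (G k) x) '' I3 ∪ (fun k => gradient (H k) x) '' I4))

/-- MPSC-LICQ. -/
def LICQ (g : Fin m → Vec n → ℝ) (h : Fin p → Vec n → ℝ)
    (G H : Fin l → Vec n → ℝ) (xb : Vec n) : Prop :=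
  ∀ (lam : Fin m → ℝ) (ρ : Fin p → ℝ) (μ ν : Fin l → ℝ),
    (∀ i, i ∉ Ig g xb → lam i = 0) →
    (∀ k, k ∉ IG G H xb ∪ IGH G H xb → μ k = 0) →
    (∀ k, k ∉ IH G H xb ∪ IGH G H xb → ν k = 0) →
    ∑ i, lam i • gradient (g i) xb + ∑ j, ρ j • gradient (h j) xb +
      ∑ k, μ k • gradient (G k) xb + ∑ k, ν k • gradient (H k) xb = 0 →
    lam = 0 ∧ ρ = 0 ∧ μ = 0 ∧ ν = 0

/-- MPSC-RCRCQ. -/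
def RCRCQ (g : Fin m → Vec n → ℝ) (h : Fin p → Vec n → ℝ)
    (G H : Fin l → Vec n → ℝ) (xb : Vec n) : Prop :=
  ∃ ε > (0:ℝ), ∀ I1 : Set (Fin m), I1 ⊆ Ig g xb →
    ∀ I3 I4 : Set (Fin l), I3 ⊆ IGH G H xb → I4 ⊆ IGH G H xb →
      ∀ x : Vec n, ‖x - xb‖ < ε →
        gradRank g h G H I1 (I3 ∪ IG G H xb) (I4 ∪ IH G H xb) x =
        gradRank g h G H I1 (I3 ∪ IG G H xb) (I4 ∪ IH G H xb) xb

/-- MPSC-WCR. -/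
def WCR (g : Fin m → Vec n → ℝ) (h : Fin p → Vec n → ℝ)
    (G H : Fin l → Vec n → ℝ) (xb : Vec n) : Prop :=
  ∃ ε > (0:ℝ), ∀ x : Vec n, ‖x - xb‖ < ε →
    gradRank g h G H (Ig g xb) (IG G H xb ∪ IGH G H xb) (IH G H xb ∪ IGH G H xb) x =
    gradRank g h G H (Ig g xb) (IG G H xb ∪ IGH G H xb) (IH G H xb ∪ IGH G H xb) xb

/-- MPSC-PWCR. -/
def PWCR (g : Fin m → Vec n → ℝ) (h : Fin p → Vec n → ℝ)
    (G H : Fin l → Vec n → ℝ) (xb : Vec n) : Prop :=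
  ∀ β1 β2 : Set (Fin l), Partition G H xb β1 β2 →
    ∃ ε > (0:ℝ), ∀ x : Vec n, ‖x - xb‖ < ε →
      gradRank g h G H (Ig g xb) (IG G H xb ∪ β1) (IH G H xb ∪ β2) x =
      gradRank g h G H (Ig g xb) (IG G H xb ∪ β1) (IH G H xb ∪ β2) xb

/-- The index set I_g^- associated with a branch (β1, β2). -/
def IgMinus (g : Fin m → Vec n → ℝ) (h : Fin p → Vec n → ℝ)
    (G H : Fin l → Vec n → ℝ) (xb : Vec n) (β1 β2 : Set (Fin l)) : Set (Fin m) :=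
  {i | i ∈ Ig g xb ∧ ∃ (lam : Fin m → ℝ) (ρ : Fin p → ℝ) (μ ν : Fin l → ℝ),
    (∀ i', 0 ≤ lam i') ∧ (∀ i', i' ∉ Ig g xb \ {i} → lam i' = 0) ∧
    (∀ k, k ∉ IG G H xb ∪ β1 → μ k = 0) ∧ (∀ k, k ∉ IH G H xb ∪ β2 → ν k = 0) ∧
    -gradient (g i) xb = ∑ i', lam i' • gradient (g i') xb + ∑ j, ρ j • gradient (h j) xb +
      ∑ k, μ k • gradient (G k) xb + ∑ k, ν k • gradient (H k) xb}

/-- MPSC-PCRSC. -/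
def PCRSC (g : Fin m → Vec n → ℝ) (h : Fin p → Vec n → ℝ)
    (G H : Fin l → Vec n → ℝ) (xb : Vec n) : Prop :=
  ∀ β1 β2 : Set (Fin l), Partition G H xb β1 β2 →
    ∃ ε > (0:ℝ), ∀ x : Vec n, ‖x - xb‖ < ε →
      gradRank g h G H (IgMinus g h G H xb β1 β2) (IG G H xb ∪ β1) (IH G H xb ∪ β2) x =
      gradRank g h G H (IgMinus g h G H xb β1 β2) (IG G H xb ∪ β1) (IH G H xb ∪ β2) xb

/-- A twice differentiable arc on [0, δ) (one-sided at the endpoint 0),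
with first derivative ξ'. -/
def TwiceDiffArc (δ : ℝ) (ξ ξ' : ℝ → Vec n) : Prop :=
  (∀ t ∈ Ico (0:ℝ) δ, HasDerivWithinAt ξ (ξ' t) (Ico (0:ℝ) δ) t) ∧
  ∀ t ∈ Ico (0:ℝ) δ, DifferentiableWithinAt ℝ ξ' (Ico (0:ℝ) δ) t

/-- MPSC-SSOCQ. -/
def SSOCQ (g : Fin m → Vec n → ℝ) (h : Fin p → Vec n → ℝ)
    (G H : Fin l → Vec n → ℝ) (xb : Vec n) : Prop :=
  ∀ d ∈ LCone g h G H xb, d ≠ 0 →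
    ∃ δ > (0:ℝ), ∃ J K : Set (Fin l), J ⊆ IGH G H xb ∧ K ⊆ IGH G H xb ∧
      ∃ ξ ξ' : ℝ → Vec n, TwiceDiffArc δ ξ ξ' ∧
        (∀ t ∈ Ico (0:ℝ) δ, ξ t ∈ Feas g h G H) ∧
        ξ 0 = xb ∧ ξ' 0 = d ∧
        (∀ t ∈ Ico (0:ℝ) δ, ∀ i ∈ Ig g xb, fderiv ℝ (g i) xb d = 0 → g i (ξ t) = 0) ∧
        (∀ t ∈ Ico (0:ℝ) δ, ∀ k ∈ IG G H xb ∪ J, G k (ξ t) = 0) ∧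
        ∀ t ∈ Ico (0:ℝ) δ, ∀ k ∈ IH G H xb ∪ K, H k (ξ t) = 0

/-- MPSC-WSOCQ. -/
def WSOCQ (g : Fin m → Vec n → ℝ) (h : Fin p → Vec n → ℝ)
    (G H : Fin l → Vec n → ℝ) (xb : Vec n) : Prop :=
  ∀ d ∈ CritSubspace g h G H xb, d ≠ 0 →
    ∃ δ > (0:ℝ), ∃ J K : Set (Fin l), J ⊆ IGH G H xb ∧ K ⊆ IGH G H xb ∧
      ∃ ζ ζ' : ℝ → Vec n, TwiceDiffArc δ ζ ζ' ∧
        (∀ t ∈ Ico (0:ℝ) δ, ζ t ∈ Feas g h G H) ∧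
        ζ 0 = xb ∧ ζ' 0 = d ∧
        (∀ t ∈ Ico (0:ℝ) δ, ∀ i ∈ Ig g xb, g i (ζ t) = 0) ∧
        (∀ t ∈ Ico (0:ℝ) δ, ∀ k ∈ IG G H xb ∪ J, G k (ζ t) = 0) ∧
        ∀ t ∈ Ico (0:ℝ) δ, ∀ k ∈ IH G H xb ∪ K, H k (ζ t) = 0

/-- The S-stationarity system for multipliers (λ, ρ, μ, ν) at xb. -/
def SStationarySystem (f : Vec n → ℝ) (g : Fin m → Vec n → ℝ) (h : Fin p → Vec n → ℝ)
    (G H : Fin l → Vec n → ℝ) (xb : Vec n)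
    (lam : Fin m → ℝ) (ρ : Fin p → ℝ) (μ ν : Fin l → ℝ) : Prop :=
  (∀ i, 0 ≤ lam i) ∧ (∀ i, lam i * g i xb = 0) ∧
  (∀ k ∈ IH G H xb ∪ IGH G H xb, μ k = 0) ∧
  (∀ k ∈ IG G H xb ∪ IGH G H xb, ν k = 0) ∧
  gradient f xb + ∑ i, lam i • gradient (g i) xb + ∑ j, ρ j • gradient (h j) xb +
    ∑ k, μ k • gradient (G k) xb + ∑ k, ν k • gradient (H k) xb = 0

def SStationary (f : Vec n → ℝ) (g : Fin m → Vec n → ℝ) (h : Fin p → Vec n → ℝ)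
    (G H : Fin l → Vec n → ℝ) (xb : Vec n) : Prop :=
  ∃ (lam : Fin m → ℝ) (ρ : Fin p → ℝ) (μ ν : Fin l → ℝ),
    SStationarySystem f g h G H xb lam ρ μ ν

/-- The M-stationarity system for multipliers (λ, ρ, μ, ν) at xb. -/
def MStationarySystem (f : Vec n → ℝ) (g : Fin m → Vec n → ℝ) (h : Fin p → Vec n → ℝ)
    (G H : Fin l → Vec n → ℝ) (xb : Vec n)
    (lam : Fin m → ℝ) (ρ : Fin p → ℝ) (μ ν : Fin l → ℝ) : Prop :=
  (∀ i, 0 ≤ lam i) ∧ (∀ i, lam i * g i xb = 0) ∧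
  (∀ k ∈ IH G H xb, μ k = 0) ∧ (∀ k ∈ IG G H xb, ν k = 0) ∧
  (∀ k ∈ IGH G H xb, μ k * ν k = 0) ∧
  gradient f xb + ∑ i, lam i • gradient (g i) xb + ∑ j, ρ j • gradient (h j) xb +
    ∑ k, μ k • gradient (G k) xb + ∑ k, ν k • gradient (H k) xb = 0

def MStationary (f : Vec n → ℝ) (g : Fin m → Vec n → ℝ) (h : Fin p → Vec n → ℝ)
    (G H : Fin l → Vec n → ℝ) (xb : Vec n) : Prop :=
  ∃ (lam : Fin m → ℝ) (ρ : Fin p → ℝ) (μ ν : Fin l → ℝ),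
    MStationarySystem f g h G H xb lam ρ μ ν

/-- Local optimality for (MPSC). -/
def LocallyOptimal (f : Vec n → ℝ) (g : Fin m → Vec n → ℝ) (h : Fin p → Vec n → ℝ)
    (G H : Fin l → Vec n → ℝ) (xb : Vec n) : Prop :=
  xb ∈ Feas g h G H ∧ ∃ ε > (0:ℝ), ∀ x ∈ Feas g h G H, ‖x - xb‖ < ε → f xb ≤ f x

/-- Hessian quadratic form dᵀ∇²φ(x)d. -/
def hessForm (φ : Vec n → ℝ) (x d : Vec n) : ℝ :=
  iteratedFDeriv ℝ 2 φ x ![d, d]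

/-- The Lagrange function ℓ. -/
def lagr (f : Vec n → ℝ) (g : Fin m → Vec n → ℝ) (h : Fin p → Vec n → ℝ)
    (G H : Fin l → Vec n → ℝ)
    (lam : Fin m → ℝ) (ρ : Fin p → ℝ) (μ ν : Fin l → ℝ) : Vec n → ℝ :=
  fun x => f x + ∑ i, lam i * g i x + ∑ j, ρ j * h j x +
    ∑ k, μ k * G k x + ∑ k, ν k * H k x

/-- Constraint-violation residual. -/
def residual (g : Fin m → Vec n → ℝ) (h : Fin p → Vec n → ℝ)
    (G H : Fin l → Vec n → ℝ) (x : Vec n) : ℝ :=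
  Real.sqrt (∑ i, max (g i x) 0 ^ 2 + ∑ j, h j x ^ 2 + ∑ k, min (G k x ^ 2) (H k x ^ 2))

/-- Penalty function P_κ. -/
def Pen (f : Vec n → ℝ) (g : Fin m → Vec n → ℝ) (h : Fin p → Vec n → ℝ)
    (G H : Fin l → Vec n → ℝ) (κ : ℝ) (x : Vec n) : ℝ :=
  f x + κ * residual g h G H x

/-- MPSC piecewise second-order quasi-normality. -/
def PSOQN (g : Fin m → Vec n → ℝ) (h : Fin p → Vec n → ℝ)
    (G H : Fin l → Vec n → ℝ) (xb : Vec n) : Prop :=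
  ∀ β1 β2 : Set (Fin l), Partition G H xb β1 β2 →
    ¬ ∃ (lam : Fin m → ℝ) (ρ : Fin p → ℝ) (μ ν : Fin l → ℝ),
      (∀ i, 0 ≤ lam i) ∧
      (∀ k, k ∉ IG G H xb ∪ β1 → μ k = 0) ∧ (∀ k, k ∉ IH G H xb ∪ β2 → ν k = 0) ∧
      ¬(lam = 0 ∧ ρ = 0 ∧ μ = 0 ∧ ν = 0) ∧
      (∑ i, lam i • gradient (g i) xb + ∑ j, ρ j • gradient (h j) xb +
        ∑ k, μ k • gradient (G k) xb + ∑ k, ν k • gradient (H k) xb = 0) ∧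
      (∀ d : Vec n, (∀ i ∈ Ig g xb, fderiv ℝ (g i) xb d = 0) →
        (∀ j, fderiv ℝ (h j) xb d = 0) →
        (∀ k ∈ IG G H xb ∪ β1, fderiv ℝ (G k) xb d = 0) →
        (∀ k ∈ IH G H xb ∪ β2, fderiv ℝ (H k) xb d = 0) →
        0 ≤ ∑ i, lam i * hessForm (g i) xb d + ∑ j, ρ j * hessForm (h j) xb d +
          ∑ k, μ k * hessForm (G k) xb d + ∑ k, ν k * hessForm (H k) xb d) ∧
      ∃ xs : ℕ → Vec n, Tendsto xs atTop (nhds xb) ∧ ∀ s,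
        (∀ i, 0 < lam i → 0 < lam i * g i (xs s)) ∧
        (∀ j, ρ j ≠ 0 → 0 < ρ j * h j (xs s)) ∧
        (∀ k, μ k ≠ 0 → 0 < μ k * G k (xs s)) ∧
        (∀ k, ν k ≠ 0 → 0 < ν k * H k (xs s))

/-! Near `xb`, continuity keeps `H k ≠ 0` for `k ∈ I_G` and `G k ≠ 0` for `k ∈ I_H`, so a feasible
point close to `xb` lies in the branch whose `β1` collects the biactive indices with `G k x = 0`;
conversely every branch lies in `F`. Hence `F` and the finite union of the branches agree near `xb`,
and the (sequential) tangent cone is local and commutes with finite unions. -/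

theorem tangentConeAt_iUnion {R E : Type*} {ι : Sort*} [AddCommGroup E] [SMul R E]
    [TopologicalSpace E] [Finite ι] (s : ι → Set E) (x : E) :
    tangentConeAt R (⋃ i, s i) x = ⋃ i, tangentConeAt R (s i) x := by
  refine subset_antisymm (fun y hy => ?_)
    (iUnion_subset fun i => tangentConeAt_mono (subset_iUnion s i))
  obtain ⟨α, l, hl, c, d, hd₀, hds, hcd⟩ := exists_fun_of_mem_tangentConeAt hy
  simp only [mem_iUnion] at hds
  obtain ⟨i, hi⟩ := frequently_exists.1 hds.frequently
  exact mem_iUnion.2 ⟨i, mem_tangentConeAt_of_frequently l c d hd₀ hi hcd⟩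

theorem tangentCone_eq_posTangentConeAt (Ω : Set (Vec n)) (xb : Vec n) :
    tangentCone Ω xb = posTangentConeAt Ω xb := by
  ext d
  rw [mem_tangentConeAt_iff_exists_seq]
  constructor
  · rintro ⟨t, x, ht, hx, hxc, htc⟩
    refine ⟨fun k => ⟨t k, ht k⟩, fun k => x k - xb, ?_, .of_forall fun k => ?_, htc⟩
    · simpa using hxc.sub_const xb
    · simpa using hx k
  · rintro ⟨c, e, he₀, hes, hce⟩
    obtain ⟨N, hN⟩ := eventually_atTop.1 hes
    refine ⟨fun k => c (k + N), fun k => xb + e (k + N), fun k => (c (k + N)).2,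
      fun k => hN _ (Nat.le_add_left N k), ?_, ?_⟩
    · simpa using (he₀.comp (tendsto_add_atTop_nat N)).const_add xb
    · simpa [NNReal.smul_def, Function.comp_def] using hce.comp (tendsto_add_atTop_nat N)

variable {g : Fin m → Vec n → ℝ} {h : Fin p → Vec n → ℝ} {G H : Fin l → Vec n → ℝ}
  {xb : Vec n} {β1 β2 : Set (Fin l)}

theorem Partition.mem_or_mem_of_mul_eq_zero (hβ : Partition G H xb β1 β2) {k : Fin l}
    (hk : G k xb * H k xb = 0) : k ∈ IG G H xb ∪ β1 ∨ k ∈ IH G H xb ∪ β2 := by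
  by_cases hGk : G k xb = 0 <;> by_cases hHk : H k xb = 0
  · have hk' : k ∈ β1 ∪ β2 := hβ.2 ▸ ⟨hGk, hHk⟩
    exact hk'.imp Or.inr Or.inr
  · exact Or.inl (Or.inl ⟨hGk, hHk⟩)
  · exact Or.inr (Or.inl ⟨hGk, hHk⟩)
  · exact absurd hk (mul_ne_zero hGk hHk)

theorem BranchFeas_subset_Feas (hxb : xb ∈ Feas g h G H) (hβ : Partition G H xb β1 β2) :
    BranchFeas g h G H xb β1 β2 ⊆ Feas g h G H := by
  rintro x ⟨hgx, hhx, hGx, hHx⟩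
  refine ⟨hgx, hhx, fun k => ?_⟩
  rcases hβ.mem_or_mem_of_mul_eq_zero (hxb.2.2 k) with hk | hk
  · rw [hGx k hk, zero_mul]
  · rw [hHx k hk, mul_zero]

theorem eventually_mem_iUnion_BranchFeas (hG : ∀ k, ContinuousAt (G k) xb)
    (hH : ∀ k, ContinuousAt (H k) xb) :
    ∀ᶠ x in 𝓝 xb, x ∈ Feas g h G H →
      x ∈ ⋃ β1, ⋃ β2, ⋃ (_ : Partition G H xb β1 β2), BranchFeas g h G H xb β1 β2 := by
  have hHne : ∀ᶠ x in 𝓝 xb, ∀ k ∈ IG G H xb, H k x ≠ 0 :=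
    (eventually_all_finite (toFinite _)).2 fun k hk => (hH k).eventually_ne hk.2
  have hGne : ∀ᶠ x in 𝓝 xb, ∀ k ∈ IH G H xb, G k x ≠ 0 :=
    (eventually_all_finite (toFinite _)).2 fun k hk => (hG k).eventually_ne hk.1
  filter_upwards [hHne, hGne] with x hHx hGx ⟨hgx, hhx, hGHx⟩
  set β1 := {k | k ∈ IGH G H xb ∧ G k x = 0}
  have hβ : Partition G H xb β1 (IGH G H xb \ β1) :=
    ⟨inter_sdiff_self _ _, union_sdiff_cancel fun _ hk => hk.1⟩
  refine mem_iUnion₂.2 ⟨β1, _, mem_iUnion.2 ⟨hβ, hgx, hhx, ?_, ?_⟩⟩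
  · rintro k (hk | hk)
    · exact (mul_eq_zero.1 (hGHx k)).resolve_right (hHx k hk)
    · exact hk.2
  · rintro k (hk | ⟨hk, hkβ⟩)
    · exact (mul_eq_zero.1 (hGHx k)).resolve_left (hGx k hk)
    · exact (mul_eq_zero.1 (hGHx k)).resolve_left fun hGk => hkβ ⟨hk, hGk⟩

theorem tangentCone_eq_iUnion_branch_general {n m p l : ℕ} (g : Fin m → Vec n → ℝ)
    (h : Fin p → Vec n → ℝ) (G H : Fin l → Vec n → ℝ)
    (hG : ∀ k, ContDiff ℝ 2 (G k)) (hH : ∀ k, ContDiff ℝ 2 (H k))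
    (xb : Vec n) (hxb : xb ∈ Feas g h G H) :
    tangentCone (Feas g h G H) xb =
      ⋃ β1 : Set (Fin l), ⋃ β2 : Set (Fin l), ⋃ (_ : Partition G H xb β1 β2),
        tangentCone (BranchFeas g h G H xb β1 β2) xb := by
  simp only [tangentCone_eq_posTangentConeAt]
  trans posTangentConeAt (⋃ β1, ⋃ β2, ⋃ (_ : Partition G H xb β1 β2),
    BranchFeas g h G H xb β1 β2) xb
  · refine subset_antisymm ?_ (tangentConeAt_mono <| iUnion_subset fun β1 => iUnion_subset
      fun β2 => iUnion_subset fun hβ => BranchFeas_subset_Feas hxb hβ)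
    have hnear := eventually_mem_iUnion_BranchFeas (g := g) (h := h) (xb := xb)
      (fun k => (hG k).continuous.continuousAt) (fun k => (hH k).continuous.continuousAt)
    exact (tangentConeAt_inter_nhds hnear).superset.trans
      (tangentConeAt_mono fun x hx => hx.2 hx.1)
  · simp only [tangentConeAt_iUnion]

theorem tangentCone_eq_iUnion_branch {n m p l : ℕ} (f : Vec n → ℝ) (g : Fin m → Vec n → ℝ)
    (h : Fin p → Vec n → ℝ) (G H : Fin l → Vec n → ℝ)
    (hf : ContDiff ℝ 2 f) (hg : ∀ i, ContDiff ℝ 2 (g i)) (hh : ∀ j, ContDiff ℝ 2 (h j))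
    (hG : ∀ k, ContDiff ℝ 2 (G k)) (hH : ∀ k, ContDiff ℝ 2 (H k))
    (xb : Vec n) (hxb : xb ∈ Feas g h G H) :
    tangentCone (Feas g h G H) xb =
      ⋃ β1 : Set (Fin l), ⋃ β2 : Set (Fin l), ⋃ (_ : Partition G H xb β1 β2),
        tangentCone (BranchFeas g h G H xb β1 β2) xb :=
  tangentCone_eq_iUnion_branch_general g h G H hG hH xb hxb

end MPSC
end
end

section
/- Let x̄ ∈ F be a feasible point of (MPSC) and assume MPSC-RCRCQ holds at x̄. Then MPSC-SSOCQ holds at x̄. -/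
open Set Filter Topology Metric

noncomputable section

/-!
Fix `d` in the linearization cone. The constraints that have to stay active along the arc
(all `h j`, the `g i` with `∇g_iᵀd = 0`, the `G k` with `k ∈ I_G` or `k ∈ I_GH` and
`∇G_kᵀd = 0`, and symmetrically for `H`) vanish at `x̄` and are flat in direction `d`, and
RCRCQ says that their gradients have constant rank near `x̄`. The implicit function theorem
applied to a maximal independent subfamily yields a `C²` arc with `ξ 0 = x̄`, `ξ' 0 = d` on which
that subfamily vanishes; by constant rank the other gradients stay in the span of the
subfamily's, hence orthogonal to `ξ'`, so those constraints vanish along the arc as well. The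
remaining inequality constraints are inactive or strictly decreasing at `t = 0`, and the
complementarity condition of the linearization cone puts every biactive index into one of the
two switching families, so the arc is feasible for small `t ≥ 0`.
-/

open Module Submodule InnerProductSpace

theorem eventually_eq_of_eventually_hasDerivAt_zero {c : ℝ → ℝ} {t₀ : ℝ}
    (hc : ∀ᶠ t in 𝓝 t₀, HasDerivAt c 0 t) : ∀ᶠ t in 𝓝 t₀, c t = c t₀ := by
  obtain ⟨ε, hε, hball⟩ := Metric.eventually_nhds_iff_ball.1 hc
  filter_upwards [ball_mem_nhds t₀ hε] with t ht
  exact isOpen_ball.is_const_of_deriv_eq_zero (convex_ball t₀ ε).isPreconnected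
    (fun s hs => (hball s hs).differentiableAt.differentiableWithinAt)
    (fun s hs => (hball s hs).deriv) ht (mem_ball_self hε)

theorem eventually_nhdsGE_nonpos_of_hasDerivAt_neg {c : ℝ → ℝ} {c' t₀ : ℝ}
    (hc : HasDerivAt c c' t₀) (hc0 : c t₀ = 0) (hc' : c' < 0) : ∀ᶠ t in 𝓝[≥] t₀, c t ≤ 0 := by
  filter_upwards [nhdsWithin_le_nhds (eventually_nhdsWithin_sign_eq_of_deriv_neg
    (hc.deriv ▸ hc') hc0), self_mem_nhdsWithin] with t ht (ht₀ : t₀ ≤ t)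
  rw [← sign_nonpos_iff, ht, sign_nonpos_iff]
  linarith

theorem eventually_span_range_comp_eq {V ι κ : Type*} [NormedAddCommGroup V] [NormedSpace ℝ V]
    [Finite ι] [Finite κ] {W : V → ι → V} {x₀ : V} (hW : ContinuousAt W x₀) {a : κ → ι}
    (hli : LinearIndependent ℝ (W x₀ ∘ a))
    (hspan : span ℝ (range (W x₀ ∘ a)) = span ℝ (range (W x₀)))
    (hrank : ∀ᶠ x in 𝓝 x₀,
      finrank ℝ (span ℝ (range (W x))) = finrank ℝ (span ℝ (range (W x₀)))) :
    ∀ᶠ x in 𝓝 x₀, span ℝ (range (W x ∘ a)) = span ℝ (range (W x)) := by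
  have hcomp : ContinuousAt (fun x => W x ∘ a) x₀ :=
    continuousAt_pi.2 fun k => (continuous_apply (a k)).continuousAt.comp hW
  filter_upwards [hcomp.eventually hli.eventually, hrank] with x hlix hrankx
  have := Fintype.ofFinite κ
  have := FiniteDimensional.span_of_finite ℝ (finite_range (W x))
  refine eq_of_le_of_finrank_le (span_mono (range_comp_subset_range a (W x))) ?_
  rw [hrankx, ← hspan, finrank_span_eq_card hli, finrank_span_eq_card hlix]

theorem exists_curve_mem_fiber_of_surjective_fderiv
    {E F : Type*} [NormedAddCommGroup E] [NormedSpace ℝ E] [CompleteSpace E]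
    [NormedAddCommGroup F] [NormedSpace ℝ F] [FiniteDimensional ℝ F]
    {r : WithTop ℕ∞} {ψ : E → F} {x₀ d : E} (hψ : ContDiffAt ℝ r ψ x₀) (hr : r ≠ 0)
    (hsurj : Function.Surjective (fderiv ℝ ψ x₀)) (hd : fderiv ℝ ψ x₀ d = 0) :
    ∃ ξ : ℝ → E, ContDiffAt ℝ r ξ 0 ∧ ξ 0 = x₀ ∧ HasDerivAt ξ d 0 ∧
      ∀ᶠ t in 𝓝 0, ψ (ξ t) = ψ x₀ := by
  obtain ⟨R, hR⟩ := (fderiv ℝ ψ x₀).exists_rightInverse_of_surjective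
    (LinearMap.range_eq_top.2 hsurj)
  -- Solve `ψ (x₀ + t • d + R y) = ψ x₀` for `y` as a function of `t`.
  set L : ℝ × F →L[ℝ] E :=
    (ContinuousLinearMap.fst ℝ ℝ F).smulRight d + R ∘L ContinuousLinearMap.snd ℝ ℝ F
  have hL : ∀ q, L q = q.1 • d + R q.2 := fun q => rfl
  set f : ℝ × F → F := fun q => ψ (x₀ + L q)
  have hψ' : ContDiffAt ℝ r ψ (x₀ + L 0) := by simpa using hψ
  have hf : ContDiffAt ℝ r f 0 :=
    hψ'.comp (0 : ℝ × F) (contDiffAt_const.add L.contDiff.contDiffAt)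
  have hf' : fderiv ℝ f 0 = fderiv ℝ ψ x₀ ∘L L := by
    have := (hψ'.differentiableAt hr).hasFDerivAt.comp (0 : ℝ × F)
      (L.hasFDerivAt.const_add x₀)
    simp only [map_zero, add_zero] at this
    exact this.fderiv
  have hinr : fderiv ℝ f 0 ∘L .inr ℝ ℝ F = .id ℝ F := by
    ext y
    simp [hf', hL, ← hR]
  have hinl : fderiv ℝ f 0 ∘L .inl ℝ ℝ F = 0 := by
    ext
    simp [hf', hL, hd]
  have hinv : (fderiv ℝ f 0 ∘L .inr ℝ ℝ F).IsInvertible := by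
    rw [hinr]
    exact ⟨.refl ℝ F, rfl⟩
  set y := hf.implicitFunction hr hinv
  have hy : HasDerivAt y 0 0 := by
    simpa [hinl] using (hf.hasStrictFDerivAt_implicitFunction hr hinv).hasFDerivAt.hasDerivAt
  have hy0 : y 0 = 0 := hf.implicitFunction_apply_self hr hinv
  refine ⟨fun t => x₀ + L (t, y t), ?_, by simp [hy0, hL], ?_, ?_⟩
  · exact contDiffAt_const.add (L.contDiff.contDiffAt.comp _
      (contDiffAt_id.prodMk (hf.contDiffAt_implicitFunction hr hinv)))
  · simpa [hL] using
      (L.hasFDerivAt.comp_hasDerivAt (0 : ℝ) ((hasDerivAt_id 0).prodMk hy)).const_add x₀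
  · simpa [f] using hf.eventually_apply_implicitFunction hr hinv

section InnerProductSpace

variable {E : Type*} [NormedAddCommGroup E] [InnerProductSpace ℝ E]

theorem LinearIndependent.surjective_inner {κ : Type*} [Fintype κ] {v : κ → E}
    (hv : LinearIndependent ℝ v) : Function.Surjective fun x : E => fun j => ⟪v j, x⟫_ℝ := by
  set B : E →ₗ[ℝ] κ → ℝ := LinearMap.pi fun j => innerₛₗ ℝ (v j)
  set A := Fintype.linearCombination ℝ v
  -- The Gram map `B ∘ A` is injective: `B (A c) = 0` forces `‖A c‖² = ∑ c j ⟪v j, A c⟫ = 0`.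
  have hgram : Function.Injective (B ∘ₗ A) := by
    rw [← LinearMap.ker_eq_bot, LinearMap.ker_eq_bot']
    intro c hc
    have hAc : A c = 0 := by
      rw [← inner_self_eq_zero (𝕜 := ℝ)]
      nth_rewrite 1 [Fintype.linearCombination_apply]
      simp only [sum_inner, real_inner_smul_left]
      exact Finset.sum_eq_zero fun j _ => by simp [show ⟪v j, A c⟫_ℝ = 0 from congrFun hc j]
    exact hv.fintypeLinearCombination_injective (hAc.trans (map_zero A).symm)
  have hsurj := LinearMap.injective_iff_surjective.1 hgram
  rw [LinearMap.coe_comp] at hsurj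
  exact hsurj.of_comp

variable [CompleteSpace E]

theorem DifferentiableAt.hasDerivAt_comp_inner_gradient {φ : E → ℝ} {ξ : ℝ → E} {c : E}
    {t : ℝ} (hφ : DifferentiableAt ℝ φ (ξ t)) (hξ : HasDerivAt ξ c t) :
    HasDerivAt (fun s => φ (ξ s)) ⟪gradient φ (ξ t), c⟫_ℝ t := by
  rw [inner_gradient_left]
  exact hφ.hasFDerivAt.comp_hasDerivAt t hξ

theorem exists_curve_of_constant_rank {ι : Type*} [Fintype ι] {φ : ι → E → ℝ}
    {r : WithTop ℕ∞} (hφ : ∀ e, ContDiff ℝ r (φ e)) (hr : r ≠ 0) {x₀ d : E}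
    (h0 : ∀ e, φ e x₀ = 0) (hd : ∀ e, fderiv ℝ (φ e) x₀ d = 0)
    (hrank : ∀ᶠ x in 𝓝 x₀, finrank ℝ (span ℝ (range fun e => gradient (φ e) x)) =
      finrank ℝ (span ℝ (range fun e => gradient (φ e) x₀))) :
    ∃ ξ : ℝ → E, ContDiffAt ℝ r ξ 0 ∧ ξ 0 = x₀ ∧ HasDerivAt ξ d 0 ∧
      ∀ᶠ t in 𝓝 0, ∀ e, φ e (ξ t) = 0 := by
  set W : E → ι → E := fun x e => gradient (φ e) x
  have hW : Continuous W := continuous_pi fun e =>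
    (toDual ℝ E).symm.continuous.comp ((hφ e).continuous_fderiv hr)
  obtain ⟨κ, a, ha, hspan, hli⟩ := exists_linearIndependent' ℝ (W x₀)
  have := Finite.of_injective a ha
  have := Fintype.ofFinite κ
  -- Follow the level set of the independent constraints `φ ∘ a`; the others come along
  -- because their gradients stay in the span of those of `φ ∘ a`.
  set ψ : E → κ → ℝ := fun x j => φ (a j) x
  have hψ' : HasFDerivAt ψ (ContinuousLinearMap.pi fun j => fderiv ℝ (φ (a j)) x₀) x₀ :=
    hasFDerivAt_pi.2 fun j => ((hφ (a j)).differentiable hr).differentiableAt.hasFDerivAt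
  have hsurj : Function.Surjective (fderiv ℝ ψ x₀) := by
    rw [hψ'.fderiv]
    convert hli.surjective_inner using 2
    ext x
    simp [W]
  obtain ⟨ξ, hξ, hξ0, hξd, hfiber⟩ := exists_curve_mem_fiber_of_surjective_fderiv
    (d := d) (contDiffAt_pi.2 fun j => (hφ (a j)).contDiffAt) hr hsurj
    (by rw [hψ'.fderiv]; ext j; simp [hd])
  refine ⟨ξ, hξ, hξ0, hξd, ?_⟩
  have hξx₀ : Tendsto ξ (𝓝 0) (𝓝 x₀) := hξ0 ▸ hξ.continuousAt.tendsto
  have hdiff : ∀ᶠ t in 𝓝 0, DifferentiableAt ℝ ξ t :=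
    ((hξ.of_le (ENat.one_le_iff_ne_zero_withTop.2 hr)).eventually (by simp)).mono
      fun t ht => ht.differentiableAt one_ne_zero
  have hderiv : ∀ᶠ t in 𝓝 0, ∀ e, HasDerivAt (fun s => φ e (ξ s)) 0 t := by
    filter_upwards [hξx₀.eventually (eventually_span_range_comp_eq hW.continuousAt hli hspan
      hrank), hdiff, hfiber.eventually_nhds] with t hspan_t hdiff_t hfiber_t e
    have hφ_t : ∀ e, DifferentiableAt ℝ (φ e) (ξ t) := fun e =>
      ((hφ e).differentiable hr).differentiableAt
    have horth : ∀ j, ⟪W (ξ t) (a j), deriv ξ t⟫_ℝ = 0 := fun j =>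
      ((hφ_t (a j)).hasDerivAt_comp_inner_gradient hdiff_t.hasDerivAt).unique
        ((hasDerivAt_const t 0).congr_of_eventuallyEq (hfiber_t.mono fun s hs => by
          simpa [ψ, h0] using congrFun hs j))
    have hmem : W (ξ t) e ∈ span ℝ (range (W (ξ t) ∘ a)) :=
      hspan_t ▸ subset_span (mem_range_self e)
    have hperp : span ℝ (range (W (ξ t) ∘ a)) ≤ (ℝ ∙ deriv ξ t)ᗮ := by
      rw [span_le]
      rintro _ ⟨j, rfl⟩
      exact mem_orthogonal_singleton_iff_inner_left.2 (horth j)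
    exact ((hφ_t e).hasDerivAt_comp_inner_gradient hdiff_t.hasDerivAt).congr_deriv
      (mem_orthogonal_singleton_iff_inner_left.1 (hperp hmem))
  filter_upwards [eventually_all.2 fun e =>
    eventually_eq_of_eventually_hasDerivAt_zero (eventually_all.1 hderiv e)] with t ht e
  rw [ht e, hξ0, h0 e]

end InnerProductSpace

namespace MPSC

variable {n m p l : ℕ}

theorem exists_twiceDiffArc_of_contDiffAt {ξ : ℝ → Vec n} (hξ : ContDiffAt ℝ 2 ξ 0)
    {P : ℝ → Prop} (hP : ∀ᶠ t in 𝓝[≥] 0, P t) :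
    ∃ δ > 0, TwiceDiffArc δ ξ (deriv ξ) ∧ ∀ t ∈ Ico 0 δ, P t := by
  obtain ⟨u, hu, hξu⟩ := hξ.contDiffOn le_rfl (by simp)
  have hint : ∀ᶠ t in 𝓝[≥] (0 : ℝ), t ∈ interior u :=
    nhdsWithin_le_nhds (interior_mem_nhds.2 hu)
  obtain ⟨δ, hδ, hsub⟩ := mem_nhdsGE_iff_exists_Ico_subset.1 (hint.and hP)
  have hξ' : ContDiffOn ℝ 2 ξ (interior u) := hξu.mono interior_subset
  have hξ'' : ContDiffOn ℝ 1 (deriv ξ) (interior u) :=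
    hξ'.deriv_of_isOpen isOpen_interior (by norm_num)
  refine ⟨δ, hδ, ⟨fun t ht => ?_, fun t ht => ?_⟩, fun t ht => (hsub ht).2⟩
  · exact ((hξ'.differentiableOn two_ne_zero).differentiableAt
      (isOpen_interior.mem_nhds (hsub ht).1)).hasDerivAt.hasDerivWithinAt
  · exact ((hξ''.differentiableOn one_ne_zero) t (hsub ht).1).mono fun s hs => (hsub hs).1

def zeroDerivIdx {ι : Type*} (φ : ι → Vec n → ℝ) (I : Set ι) (xb d : Vec n) : Set ι :=
  {k | k ∈ I ∧ fderiv ℝ (φ k) xb d = 0}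

def activeFamily (g : Fin m → Vec n → ℝ) (h : Fin p → Vec n → ℝ) (G H : Fin l → Vec n → ℝ)
    (I1 : Set (Fin m)) (I3 I4 : Set (Fin l)) : I1 ⊕ Fin p ⊕ I3 ⊕ I4 → Vec n → ℝ :=
  Sum.elim (fun i => g i) (Sum.elim h (Sum.elim (fun k => G k) fun k => H k))

def ConstraintsVanishAt (g : Fin m → Vec n → ℝ) (h : Fin p → Vec n → ℝ)
    (G H : Fin l → Vec n → ℝ) (I1 : Set (Fin m)) (I3 I4 : Set (Fin l)) (x : Vec n) : Prop :=
  (∀ i ∈ I1, g i x = 0) ∧ (∀ j, h j x = 0) ∧ (∀ k ∈ I3, G k x = 0) ∧ ∀ k ∈ I4, H k x = 0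

section Constraints

variable {g : Fin m → Vec n → ℝ} {h : Fin p → Vec n → ℝ} {G H : Fin l → Vec n → ℝ}
  {I1 : Set (Fin m)} {I3 I4 : Set (Fin l)}

theorem gradRank_eq_finrank_activeFamily (x : Vec n) :
    gradRank g h G H I1 I3 I4 x =
      finrank ℝ (span ℝ (range fun e => gradient (activeFamily g h G H I1 I3 I4 e) x)) := by
  have hrange : (range fun e => gradient (activeFamily g h G H I1 I3 I4 e) x) =
      (fun i => gradient (g i) x) '' I1 ∪ range (fun j => gradient (h j) x) ∪
        (fun k => gradient (G k) x) '' I3 ∪ (fun k => gradient (H k) x) '' I4 := by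
    ext v
    simp [activeFamily, Sum.exists, or_assoc]
  rw [hrange, gradRank]

theorem forall_activeFamily_eq_zero_iff {x : Vec n} :
    (∀ e, activeFamily g h G H I1 I3 I4 e x = 0) ↔ ConstraintsVanishAt g h G H I1 I3 I4 x := by
  simp [activeFamily, ConstraintsVanishAt]

theorem mem_feas_of_constraintsVanishAt {xb d x : Vec n} (hxb : xb ∈ Feas g h G H)
    (hdGH : ∀ k ∈ IGH G H xb, fderiv ℝ (G k) xb d * fderiv ℝ (H k) xb d = 0)
    (hgx : ∀ i, g i x ≤ 0)
    (hx : ConstraintsVanishAt g h G H I1 (IG G H xb ∪ zeroDerivIdx G (IGH G H xb) xb d)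
      (IH G H xb ∪ zeroDerivIdx H (IGH G H xb) xb d) x) : x ∈ Feas g h G H := by
  obtain ⟨-, hhx, hGx, hHx⟩ := hx
  refine ⟨hgx, hhx, fun k => ?_⟩
  by_cases hGk : G k xb = 0 <;> by_cases hHk : H k xb = 0
  · rcases mul_eq_zero.1 (hdGH k ⟨hGk, hHk⟩) with hd | hd
    · rw [hGx k (Or.inr ⟨⟨hGk, hHk⟩, hd⟩), zero_mul]
    · rw [hHx k (Or.inr ⟨⟨hGk, hHk⟩, hd⟩), mul_zero]
  · rw [hGx k (Or.inl ⟨hGk, hHk⟩), zero_mul]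
  · rw [hHx k (Or.inl ⟨hGk, hHk⟩), mul_zero]
  · exact absurd (hxb.2.2 k) (mul_ne_zero hGk hHk)

theorem eventually_nhdsGE_ineq_nonpos {xb d : Vec n} {ξ : ℝ → Vec n}
    (hg : ∀ i, Differentiable ℝ (g i)) (hxb : ∀ i, g i xb ≤ 0)
    (hdg : ∀ i ∈ Ig g xb, fderiv ℝ (g i) xb d ≤ 0) (hξ0 : ξ 0 = xb) (hξd : HasDerivAt ξ d 0)
    (hzero : ∀ᶠ t in 𝓝 0, ∀ i ∈ zeroDerivIdx g (Ig g xb) xb d, g i (ξ t) = 0) :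
    ∀ᶠ t in 𝓝[≥] 0, ∀ i, g i (ξ t) ≤ 0 := by
  refine eventually_all.2 fun i => ?_
  have hc : HasDerivAt (fun t => g i (ξ t)) (fderiv ℝ (g i) xb d) 0 := by
    have := (hg i (ξ 0)).hasFDerivAt.comp_hasDerivAt 0 hξd
    rwa [hξ0] at this
  rcases (hxb i).lt_or_eq with hinactive | hactive
  · refine nhdsWithin_le_nhds ((hc.continuousAt.eventually (gt_mem_nhds ?_)).mono
      fun _ => le_of_lt)
    simpa [hξ0] using hinactive
  rcases (hdg i hactive).lt_or_eq with hdesc | hflat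
  · exact eventually_nhdsGE_nonpos_of_hasDerivAt_neg hc (by simp [hξ0, hactive]) hdesc
  · exact nhdsWithin_le_nhds (hzero.mono fun t ht => (ht i ⟨hactive, hflat⟩).le)

theorem exists_arc_of_rcrcq (hg : ∀ i, ContDiff ℝ 2 (g i)) (hh : ∀ j, ContDiff ℝ 2 (h j))
    (hG : ∀ k, ContDiff ℝ 2 (G k)) (hH : ∀ k, ContDiff ℝ 2 (H k)) {xb d : Vec n}
    (hxb : xb ∈ Feas g h G H) (hcq : RCRCQ g h G H xb) (hd : d ∈ LCone g h G H xb) :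
    ∃ ξ : ℝ → Vec n, ContDiffAt ℝ 2 ξ 0 ∧ ξ 0 = xb ∧ HasDerivAt ξ d 0 ∧
      ∀ᶠ t in 𝓝 0, ConstraintsVanishAt g h G H (zeroDerivIdx g (Ig g xb) xb d)
        (IG G H xb ∪ zeroDerivIdx G (IGH G H xb) xb d)
        (IH G H xb ∪ zeroDerivIdx H (IGH G H xb) xb d) (ξ t) := by
  classical
  obtain ⟨-, hdh, hdG, hdH, -⟩ := hd
  obtain ⟨ε, hε, hrank⟩ := hcq
  set I1 := zeroDerivIdx g (Ig g xb) xb d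
  set J := zeroDerivIdx G (IGH G H xb) xb d
  set K := zeroDerivIdx H (IGH G H xb) xb d
  have hrank' : ∀ᶠ x in 𝓝 xb, gradRank g h G H I1 (IG G H xb ∪ J) (IH G H xb ∪ K) x =
      gradRank g h G H I1 (IG G H xb ∪ J) (IH G H xb ∪ K) xb := by
    refine Metric.eventually_nhds_iff.2 ⟨ε, hε, fun x hx => ?_⟩
    rw [union_comm (IG G H xb), union_comm (IH G H xb)]
    exact hrank _ (sep_subset _ _) _ _ (sep_subset _ _) (sep_subset _ _) x
      (by rwa [← dist_eq_norm])
  simp only [gradRank_eq_finrank_activeFamily] at hrank'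
  set φ := activeFamily g h G H I1 (IG G H xb ∪ J) (IH G H xb ∪ K)
  have hsmooth : ∀ e, ContDiff ℝ 2 (φ e) := by
    rintro (⟨i, -⟩ | j | ⟨k, -⟩ | ⟨k, -⟩)
    exacts [hg i, hh j, hG k, hH k]
  have hzero : ∀ e, φ e xb = 0 :=
    forall_activeFamily_eq_zero_iff.2 ⟨fun i hi => hi.1, hxb.2.1,
      fun k hk => hk.elim (·.1) (·.1.1), fun k hk => hk.elim (·.2) (·.1.2)⟩
  have hflat : ∀ e, fderiv ℝ (φ e) xb d = 0 := by
    rintro (⟨i, hi⟩ | j | ⟨k, hk | hk⟩ | ⟨k, hk | hk⟩)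
    exacts [hi.2, hdh j, hdG k hk, hk.2, hdH k hk, hk.2]
  obtain ⟨ξ, hξ, hξ0, hξd, hvanish⟩ :=
    exists_curve_of_constant_rank hsmooth two_ne_zero hzero hflat hrank'
  exact ⟨ξ, hξ, hξ0, hξd, hvanish.mono fun t ht => forall_activeFamily_eq_zero_iff.1 ht⟩

end Constraints

theorem rcrcq_implies_ssocq_general {n m p l : ℕ} (g : Fin m → Vec n → ℝ)
    (h : Fin p → Vec n → ℝ) (G H : Fin l → Vec n → ℝ)
    (hg : ∀ i, ContDiff ℝ 2 (g i)) (hh : ∀ j, ContDiff ℝ 2 (h j))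
    (hG : ∀ k, ContDiff ℝ 2 (G k)) (hH : ∀ k, ContDiff ℝ 2 (H k))
    (xb : Vec n) (hxb : xb ∈ Feas g h G H)
    (hcq : RCRCQ g h G H xb) : SSOCQ g h G H xb := by
  rintro d hd -
  obtain ⟨ξ, hξ, hξ0, hξd, hvanish⟩ := exists_arc_of_rcrcq hg hh hG hH hxb hcq hd
  have hineq := eventually_nhdsGE_ineq_nonpos (fun i => (hg i).differentiable two_ne_zero)
    hxb.1 hd.1 hξ0 hξd (hvanish.mono fun _ ht => ht.1)
  obtain ⟨δ, hδ, harc, hP⟩ :=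
    exists_twiceDiffArc_of_contDiffAt hξ (hineq.and (nhdsWithin_le_nhds hvanish))
  refine ⟨δ, hδ, _, _, sep_subset _ _, sep_subset _ _, ξ, deriv ξ, harc,
    fun t ht => mem_feas_of_constraintsVanishAt hxb hd.2.2.2.2 (hP t ht).1 (hP t ht).2,
    hξ0, hξd.deriv, fun t ht i hi hdi => (hP t ht).2.1 i ⟨hi, hdi⟩,
    fun t ht => (hP t ht).2.2.2.1, fun t ht => (hP t ht).2.2.2.2⟩

theorem rcrcq_implies_ssocq {n m p l : ℕ} (f : Vec n → ℝ) (g : Fin m → Vec n → ℝ)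
    (h : Fin p → Vec n → ℝ) (G H : Fin l → Vec n → ℝ)
    (hf : ContDiff ℝ 2 f) (hg : ∀ i, ContDiff ℝ 2 (g i)) (hh : ∀ j, ContDiff ℝ 2 (h j))
    (hG : ∀ k, ContDiff ℝ 2 (G k)) (hH : ∀ k, ContDiff ℝ 2 (H k))
    (xb : Vec n) (hxb : xb ∈ Feas g h G H)
    (hcq : RCRCQ g h G H xb) : SSOCQ g h G H xb :=
  rcrcq_implies_ssocq_general g h G H hg hh hG hH xb hxb hcq

end MPSC
end
end

section
/- Let x̄ ∈ F be a feasible point of (MPSC) and assume MPSC-PWCR holds at x̄. Then MPSC-WSOCQ holds at x̄. -/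
open Set Filter Topology Metric

noncomputable section

/-!
Use the branch `β₁ = I_GH`, `β₂ = ∅` of PWCR: the gradients of the constraints that must stay
zero (`gᵢ`, `i ∈ I_g`; all `hⱼ`; `G_k`, `k ∈ I_G ∪ I_GH`; `H_k`, `k ∈ I_H`) have constant rank
near `x̄`. A maximal linearly independent subfamily at `x̄` stays independent nearby and, by the
constant rank, keeps spanning all of these gradients. The implicit function theorem gives a `C²`
arc through `x̄` with velocity `d̃` on which the subfamily vanishes; its velocity is then orthogonal
to all the gradients, so every one of these constraints is constant, hence zero, along the arc.
The inactive inequalities stay negative for small `t`, so the arc is feasible.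
-/

open Module Submodule
open scoped RealInnerProductSpace

theorem ContDiffAt.exists_curve_in_levelSet {E F : Type*} [NormedAddCommGroup E]
    [NormedSpace ℝ E] [NormedAddCommGroup F] [NormedSpace ℝ F]
    [FiniteDimensional ℝ F] {ψ : E → F} {x₀ d : E} {r : WithTop ℕ∞}
    (hψ : ContDiffAt ℝ r ψ x₀) (hr : r ≠ 0) (hsurj : (fderiv ℝ ψ x₀).range = ⊤)
    (hd : fderiv ℝ ψ x₀ d = 0) :
    ∃ γ : ℝ → E, ContDiffAt ℝ r γ 0 ∧ γ 0 = x₀ ∧ HasDerivAt γ d 0 ∧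
      ∀ᶠ t in 𝓝 0, ψ (γ t) = ψ x₀ := by
  have : CompleteSpace F := FiniteDimensional.complete ℝ F
  obtain ⟨R, hR⟩ := (fderiv ℝ ψ x₀).exists_rightInverse_of_surjective hsurj
  -- Solve `ψ (x₀ + t • d + R y) = ψ x₀` for `y` as a function of `t`; the partial derivative
  -- in `y` is the identity because `R` is a right inverse.
  set c : ℝ × F →L[ℝ] E :=
    (ContinuousLinearMap.fst ℝ ℝ F).smulRight d + R ∘L ContinuousLinearMap.snd ℝ ℝ F
  have hc : ∀ q, c q = q.1 • d + R q.2 := fun q => rfl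
  have hc0 : x₀ + c (0, 0) = x₀ := by simp [hc]
  set f : ℝ × F → F := fun q => ψ (x₀ + c q)
  have hfx : f (0, 0) = ψ x₀ := congrArg ψ hc0
  have hψ' : ContDiffAt ℝ r ψ (x₀ + c (0, 0)) := by rwa [hc0]
  have hf : ContDiffAt ℝ r f (0, 0) :=
    hψ'.comp (0, 0) (contDiffAt_const.add c.contDiff.contDiffAt)
  have hf' : fderiv ℝ f (0, 0) = fderiv ℝ ψ x₀ ∘L c := by
    have := (hψ'.differentiableAt hr).hasFDerivAt.comp (0, 0) (c.hasFDerivAt.const_add x₀)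
    rw [hc0] at this
    exact this.fderiv
  have hinr : fderiv ℝ f (0, 0) ∘L .inr ℝ ℝ F = .id ℝ F := by
    rw [hf', ← hR]; ext y; simp [hc]
  have hinl : fderiv ℝ f (0, 0) ∘L .inl ℝ ℝ F = 0 := by
    ext; simp [hf', hc, hd]
  have hinv : (fderiv ℝ f (0, 0) ∘L .inr ℝ ℝ F).IsInvertible := by
    rw [hinr]; exact ContinuousLinearMap.isInvertible_equiv (f := .refl ℝ F)
  set z := hf.implicitFunction hr hinv
  have hz0 : z 0 = 0 := hf.implicitFunction_apply_self hr hinv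
  have hz' : HasDerivAt z 0 0 := by
    simpa [hinl] using (hf.hasStrictFDerivAt_implicitFunction hr hinv).hasFDerivAt.hasDerivAt
  refine ⟨fun t => x₀ + c (t, z t), ?_, by simpa [hz0] using hc0, ?_, ?_⟩
  · exact contDiffAt_const.add (c.contDiff.contDiffAt.comp 0
      (contDiffAt_id.prodMk (hf.contDiffAt_implicitFunction hr hinv)))
  · have := (c.hasFDerivAt.comp_hasDerivAt 0 ((hasDerivAt_id (0:ℝ)).prodMk hz')).const_add x₀
    simpa [hc] using this
  · simpa only [hfx] using hf.eventually_apply_implicitFunction hr hinv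

theorem LinearIndependent.range_eq_top_of_apply_eq_inner {E κ : Type*} [NormedAddCommGroup E]
    [InnerProductSpace ℝ E] [Finite κ] {w : κ → E} (hw : LinearIndependent ℝ w)
    (M : E →ₗ[ℝ] κ → ℝ) (hM : ∀ v b, M v b = ⟪w b, v⟫) : M.range = ⊤ := by
  have := Fintype.ofFinite κ
  set L := Fintype.linearCombination ℝ w
  -- `M ∘ L` is the Gram matrix of `w`.
  have hinj : Function.Injective (M ∘ₗ L) := by
    rw [← LinearMap.ker_eq_bot, LinearMap.ker_eq_bot']
    intro c hc
    have hLc : L c = 0 := by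
      rw [← inner_self_eq_zero (𝕜 := ℝ)]
      nth_rewrite 1 [Fintype.linearCombination_apply]
      simp only [sum_inner, real_inner_smul_left, ← hM]
      simp [show M (L c) = 0 from hc]
    exact funext (Fintype.linearIndependent_iff.1 hw c hLc)
  rw [LinearMap.range_eq_top]
  intro y
  obtain ⟨c, hc⟩ := LinearMap.injective_iff_surjective.1 hinj y
  exact ⟨L c, hc⟩

theorem exists_linearIndepOn_eventually_span_eq {X V ι : Type*} [TopologicalSpace X]
    [NormedAddCommGroup V] [NormedSpace ℝ V] [FiniteDimensional ℝ V] [Finite ι]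
    {u : ι → X → V} {x₀ : X} (hu : ∀ i, ContinuousAt (u i) x₀)
    (hrank : ∀ᶠ x in 𝓝 x₀, finrank ℝ (span ℝ (range fun i => u i x)) =
      finrank ℝ (span ℝ (range fun i => u i x₀))) :
    ∃ s : Set ι, LinearIndepOn ℝ (fun i => u i x₀) s ∧
      ∀ᶠ x in 𝓝 x₀, span ℝ (range fun b : s => u b x) = span ℝ (range fun i => u i x) := by
  obtain ⟨s, -, -, hspan, hind⟩ :=
    exists_linearIndepOn_extension (linearIndepOn_empty ℝ fun i => u i x₀) (empty_subset univ)
  have := Fintype.ofFinite s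
  have hind_near : ∀ᶠ x in 𝓝 x₀, LinearIndepOn ℝ (fun i => u i x) s :=
    (tendsto_pi_nhds.2 fun b : s => hu b).eventually hind.eventually
  have hspan_eq : span ℝ (range fun b : s => u b x₀) = span ℝ (range fun i => u i x₀) := by
    rw [← image_eq_range (fun i => u i x₀), ← image_univ]
    exact (span_mono (image_mono (subset_univ s))).antisymm (span_le.2 hspan)
  refine ⟨s, hind, ?_⟩
  filter_upwards [hind_near, hrank] with x hx hxrank
  refine Submodule.eq_of_le_of_finrank_le (span_mono ?_) ?_
  · rintro _ ⟨b, rfl⟩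
    exact ⟨b, rfl⟩
  · rw [finrank_span_eq_card hx, hxrank, ← hspan_eq, finrank_span_eq_card hind]

theorem forall_apply_eq_zero_of_gradient_mem_span {E ι : Type*} [NormedAddCommGroup E]
    [InnerProductSpace ℝ E] [CompleteSpace E] {Φ : ι → E → ℝ} {s : Set ι} {γ : ℝ → E}
    {U : Set ℝ} (hU : IsOpen U) (hU' : IsPreconnected U) (hΦ : ∀ i, Differentiable ℝ (Φ i))
    (hγ : DifferentiableOn ℝ γ U)
    (hspan : ∀ t ∈ U, ∀ i,
      gradient (Φ i) (γ t) ∈ span ℝ (range fun b : s => gradient (Φ b) (γ t)))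
    (hs : ∀ t ∈ U, ∀ b ∈ s, Φ b (γ t) = 0) {t₀ : ℝ} (ht₀ : t₀ ∈ U)
    (h₀ : ∀ i, Φ i (γ t₀) = 0) :
    ∀ t ∈ U, ∀ i, Φ i (γ t) = 0 := by
  have hderiv : ∀ t ∈ U, ∀ i,
      HasDerivAt (fun τ => Φ i (γ τ)) ⟪gradient (Φ i) (γ t), deriv γ t⟫ t := fun t ht i => by
    rw [inner_gradient_left]
    exact (hΦ i _).hasFDerivAt.comp_hasDerivAt t (hγ.differentiableAt (hU.mem_nhds ht)).hasDerivAt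
  have horth : ∀ t ∈ U,
      span ℝ (range fun b : s => gradient (Φ b) (γ t)) ≤ (ℝ ∙ deriv γ t)ᗮ := by
    intro t ht
    refine span_le.2 ?_
    rintro _ ⟨⟨b, hb⟩, rfl⟩
    refine mem_orthogonal_singleton_iff_inner_left.2 ((hderiv t ht b).unique ?_)
    refine (hasDerivAt_const t 0).congr_of_eventuallyEq ?_
    filter_upwards [hU.mem_nhds ht] with τ hτ using hs τ hτ b hb
  intro t ht i
  rw [← h₀ i]
  refine hU.is_const_of_deriv_eq_zero hU'
    (fun τ hτ => (hderiv τ hτ i).differentiableAt.differentiableWithinAt) (fun τ hτ => ?_) ht ht₀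
  rw [(hderiv τ hτ i).deriv, Pi.zero_apply]
  exact mem_orthogonal_singleton_iff_inner_left.1 (horth τ hτ (hspan τ hτ i))

theorem exists_curve_of_finrank_eventually_eq {E ι : Type*} [NormedAddCommGroup E]
    [InnerProductSpace ℝ E] [FiniteDimensional ℝ E] [Finite ι] {Φ : ι → E → ℝ} {x₀ d : E}
    {r : WithTop ℕ∞} (hΦ : ∀ i, ContDiff ℝ r (Φ i)) (hr : r ≠ 0) (hΦx₀ : ∀ i, Φ i x₀ = 0)
    (hrank : ∀ᶠ x in 𝓝 x₀, finrank ℝ (span ℝ (range fun i => gradient (Φ i) x)) =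
      finrank ℝ (span ℝ (range fun i => gradient (Φ i) x₀)))
    (hd : ∀ i, fderiv ℝ (Φ i) x₀ d = 0) :
    ∃ γ : ℝ → E, ContDiffAt ℝ r γ 0 ∧ γ 0 = x₀ ∧ HasDerivAt γ d 0 ∧
      ∀ᶠ t in 𝓝 0, ∀ i, Φ i (γ t) = 0 := by
  obtain ⟨s, hind, hspan⟩ := exists_linearIndepOn_eventually_span_eq
    (u := fun i x => gradient (Φ i) x) (x₀ := x₀)
    (fun i => ((InnerProductSpace.toDual ℝ E).symm.continuous.comp
      ((hΦ i).continuous_fderiv hr)).continuousAt) hrank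
  have := Fintype.ofFinite s
  set ψ : E → s → ℝ := fun x b => Φ b x
  have hψ : ContDiffAt ℝ r ψ x₀ := (contDiff_pi.2 fun b : s => hΦ b).contDiffAt
  have hψ' : ∀ v b, fderiv ℝ ψ x₀ v b = ⟪gradient (Φ b) x₀, v⟫ := by
    intro v b
    have : HasFDerivAt ψ (ContinuousLinearMap.pi fun b : s => fderiv ℝ (Φ b) x₀) x₀ :=
      hasFDerivAt_pi.2 fun b => ((hΦ b).differentiable hr x₀).hasFDerivAt
    rw [this.fderiv, inner_gradient_left]
    rfl
  obtain ⟨γ, hγ, hγ0, hγd, hlevel⟩ := hψ.exists_curve_in_levelSet hr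
    (hind.range_eq_top_of_apply_eq_inner _ hψ')
    (funext fun b => by rw [hψ', inner_gradient_left, hd, Pi.zero_apply])
  refine ⟨γ, hγ, hγ0, hγd, ?_⟩
  have hγdiff : ∀ᶠ t in 𝓝 0, DifferentiableAt ℝ γ t :=
    ((hγ.of_le (ENat.one_le_iff_ne_zero_withTop.2 hr)).eventually (by simp)).mono
      fun t ht => ht.differentiableAt one_ne_zero
  have hγx₀ : Tendsto γ (𝓝 0) (𝓝 x₀) := hγ0 ▸ hγ.continuousAt
  obtain ⟨δ, hδ, hball⟩ :=
    Metric.eventually_nhds_iff_ball.1 (hγdiff.and (hlevel.and (hγx₀.eventually hspan)))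
  filter_upwards [ball_mem_nhds 0 hδ] with t ht
  refine forall_apply_eq_zero_of_gradient_mem_span (s := s) isOpen_ball
    (convex_ball 0 δ).isPreconnected (fun i => (hΦ i).differentiable hr)
    (fun τ hτ => (hball τ hτ).1.differentiableWithinAt) (fun τ hτ i => ?_) (fun τ hτ b hb => ?_)
    (mem_ball_self hδ) (by simpa [hγ0] using hΦx₀) t ht
  · rw [(hball τ hτ).2.2]
    exact subset_span ⟨i, rfl⟩
  · simpa [ψ, hΦx₀] using congrFun (hball τ hτ).2.1 ⟨b, hb⟩

namespace MPSC

variable {n m p l : ℕ}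

theorem exists_twiceDiffArc {γ : ℝ → Vec n} (hγ : ContDiffAt ℝ 2 γ 0) {P : ℝ → Prop}
    (hP : ∀ᶠ t in 𝓝 0, P t) :
    ∃ δ > 0, TwiceDiffArc δ γ (deriv γ) ∧ ∀ t ∈ Ico 0 δ, P t := by
  obtain ⟨δ, hδ, hball⟩ := Metric.eventually_nhds_iff_ball.1 ((hγ.eventually (by simp)).and hP)
  have hsub : Ico 0 δ ⊆ ball 0 δ := fun t ht => by simp [abs_of_nonneg ht.1, ht.2]
  refine ⟨δ, hδ, ⟨fun t ht => ?_, fun t ht => ?_⟩, fun t ht => (hball t (hsub ht)).2⟩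
  · exact ((hball t (hsub ht)).1.differentiableAt two_ne_zero).hasDerivAt.hasDerivWithinAt
  · exact (((hball t (hsub ht)).1.derivWithin (m := 1) (by norm_num)).differentiableAt
      one_ne_zero).differentiableWithinAt

def constraintFamily (g : Fin m → Vec n → ℝ) (h : Fin p → Vec n → ℝ)
    (G H : Fin l → Vec n → ℝ) (I1 : Set (Fin m)) (I3 I4 : Set (Fin l)) :
    (I1 ⊕ Fin p) ⊕ (I3 ⊕ I4) → Vec n → ℝ :=
  Sum.elim (Sum.elim (fun i => g i) h) (Sum.elim (fun k => G k) (fun k => H k))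

section

variable {g : Fin m → Vec n → ℝ} {h : Fin p → Vec n → ℝ} {G H : Fin l → Vec n → ℝ}

theorem forall_constraintFamily_iff {I1 : Set (Fin m)} {I3 I4 : Set (Fin l)}
    {P : (Vec n → ℝ) → Prop} :
    (∀ a, P (constraintFamily g h G H I1 I3 I4 a)) ↔
      (∀ i ∈ I1, P (g i)) ∧ (∀ j, P (h j)) ∧ (∀ k ∈ I3, P (G k)) ∧ ∀ k ∈ I4, P (H k) := by
  simp [constraintFamily, Sum.forall, and_assoc]

theorem gradRank_eq_finrank_span (I1 : Set (Fin m)) (I3 I4 : Set (Fin l)) (x : Vec n) :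
    gradRank g h G H I1 I3 I4 x =
      finrank ℝ (span ℝ (range fun a => gradient (constraintFamily g h G H I1 I3 I4 a) x)) := by
  have : (fun a => gradient (constraintFamily g h G H I1 I3 I4 a) x) =
      Sum.elim (Sum.elim (fun i : I1 => gradient (g i) x) fun j => gradient (h j) x)
        (Sum.elim (fun k : I3 => gradient (G k) x) fun k : I4 => gradient (H k) x) := by
    funext a; rcases a with (_ | _) | (_ | _) <;> rfl
  rw [gradRank, this, Set.Sum.elim_range, Set.Sum.elim_range, Set.Sum.elim_range,
    ← image_eq_range (fun i => gradient (g i) x), ← image_eq_range (fun k => gradient (G k) x),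
    ← image_eq_range (fun k => gradient (H k) x), union_assoc _ _ (_ '' I4)]

theorem PWCR.eventually_finrank_eq {xb : Vec n} (hcq : PWCR g h G H xb) :
    ∀ᶠ x in 𝓝 xb, finrank ℝ (span ℝ (range fun a =>
        gradient (constraintFamily g h G H (Ig g xb) (IG G H xb ∪ IGH G H xb) (IH G H xb) a) x)) =
      finrank ℝ (span ℝ (range fun a =>
        gradient (constraintFamily g h G H (Ig g xb) (IG G H xb ∪ IGH G H xb) (IH G H xb) a) xb)) := by
  obtain ⟨ε, hε, hrank⟩ := hcq (IGH G H xb) ∅ ⟨inter_empty _, union_empty _⟩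
  filter_upwards [ball_mem_nhds xb hε] with x hx
  simpa only [gradRank_eq_finrank_span, union_empty] using hrank x (mem_ball_iff_norm.1 hx)

theorem eventually_inactive_lt_zero {α : Type*} {L : Filter α} {xb : Vec n} {x : α → Vec n}
    (hxb : ∀ i, g i xb ≤ 0) (hg : ∀ i, ContinuousAt (g i) xb) (hx : Tendsto x L (𝓝 xb)) :
    ∀ᶠ a in L, ∀ i ∉ Ig g xb, g i (x a) < 0 := by
  refine eventually_all.2 fun i => ?_
  by_cases hi : i ∈ Ig g xb
  · exact .of_forall fun _ hni => (hni hi).elim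
  · exact (((hg i).tendsto.comp hx).eventually_lt_const ((hxb i).lt_of_ne hi)).mono
      fun _ ht _ => ht

theorem mem_feas_of_active_eq_zero {xb x : Vec n} (hxb : xb ∈ Feas g h G H)
    (hg0 : ∀ i ∈ Ig g xb, g i x = 0) (hneg : ∀ i ∉ Ig g xb, g i x ≤ 0) (hh0 : ∀ j, h j x = 0)
    (hG0 : ∀ k ∈ IG G H xb ∪ IGH G H xb, G k x = 0) (hH0 : ∀ k ∈ IH G H xb, H k x = 0) :
    x ∈ Feas g h G H := by
  refine ⟨fun i => ?_, hh0, fun k => ?_⟩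
  · by_cases hi : i ∈ Ig g xb
    · exact (hg0 i hi).le
    · exact hneg i hi
  · by_cases hGk : G k xb = 0
    · rw [hG0 k (by by_cases hHk : H k xb = 0 <;> simp [IG, IGH, hGk, hHk]), zero_mul]
    · rw [hH0 k ⟨hGk, (mul_eq_zero.1 (hxb.2.2 k)).resolve_left hGk⟩, mul_zero]

end

theorem pwcr_implies_wsocq_general {n m p l : ℕ} (g : Fin m → Vec n → ℝ)
    (h : Fin p → Vec n → ℝ) (G H : Fin l → Vec n → ℝ)
    (hg : ∀ i, ContDiff ℝ 2 (g i)) (hh : ∀ j, ContDiff ℝ 2 (h j))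
    (hG : ∀ k, ContDiff ℝ 2 (G k)) (hH : ∀ k, ContDiff ℝ 2 (H k))
    (xb : Vec n) (hxb : xb ∈ Feas g h G H)
    (hcq : PWCR g h G H xb) : WSOCQ g h G H xb := by
  rintro d ⟨hd_g, hd_h, hd_G, hd_H⟩ -
  obtain ⟨γ, hγ, hγ0, hγd, hvanish⟩ := exists_curve_of_finrank_eventually_eq
    (forall_constraintFamily_iff.2 ⟨fun i _ => hg i, hh, fun k _ => hG k, fun k _ => hH k⟩)
    two_ne_zero
    (forall_constraintFamily_iff (P := fun φ => φ xb = 0) |>.2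
      ⟨fun i hi => hi, hxb.2.1, fun k hk => hk.elim And.left And.left, fun k hk => hk.2⟩)
    hcq.eventually_finrank_eq
    (forall_constraintFamily_iff (P := fun φ => fderiv ℝ φ xb d = 0) |>.2
      ⟨hd_g, hd_h, hd_G, fun k hk => hd_H k (Or.inl hk)⟩)
  have hinactive := eventually_inactive_lt_zero hxb.1 (fun i => (hg i).continuous.continuousAt)
    (hγ0 ▸ hγ.continuousAt : Tendsto γ (𝓝 0) (𝓝 xb))
  obtain ⟨δ, hδ, harc, hδall⟩ := exists_twiceDiffArc hγ (hvanish.and hinactive)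
  have hactive : ∀ t ∈ Ico 0 δ, (∀ i ∈ Ig g xb, g i (γ t) = 0) ∧ (∀ j, h j (γ t) = 0) ∧
      (∀ k ∈ IG G H xb ∪ IGH G H xb, G k (γ t) = 0) ∧ ∀ k ∈ IH G H xb, H k (γ t) = 0 :=
    fun t ht => forall_constraintFamily_iff (P := fun φ => φ (γ t) = 0) |>.1 (hδall t ht).1
  refine ⟨δ, hδ, IGH G H xb, ∅, subset_rfl, empty_subset _, γ, deriv γ, harc, fun t ht => ?_,
    hγ0, hγd.deriv, fun t ht => (hactive t ht).1, fun t ht => (hactive t ht).2.2.1,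
    fun t ht => by simpa using (hactive t ht).2.2.2⟩
  obtain ⟨hg0, hh0, hG0, hH0⟩ := hactive t ht
  exact mem_feas_of_active_eq_zero hxb hg0 (fun i hi => ((hδall t ht).2 i hi).le) hh0 hG0 hH0

theorem pwcr_implies_wsocq {n m p l : ℕ} (f : Vec n → ℝ) (g : Fin m → Vec n → ℝ)
    (h : Fin p → Vec n → ℝ) (G H : Fin l → Vec n → ℝ)
    (hf : ContDiff ℝ 2 f) (hg : ∀ i, ContDiff ℝ 2 (g i)) (hh : ∀ j, ContDiff ℝ 2 (h j))
    (hG : ∀ k, ContDiff ℝ 2 (G k)) (hH : ∀ k, ContDiff ℝ 2 (H k))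
    (xb : Vec n) (hxb : xb ∈ Feas g h G H)
    (hcq : PWCR g h G H xb) : WSOCQ g h G H xb :=
  pwcr_implies_wsocq_general g h G H hg hh hG hH xb hxb hcq

end MPSC
end
end

section
/- Let x̄ ∈ F be an M-stationary point of (MPSC) with multipliers (λ, ρ, μ, ν) satisfying the M-stationarity system. Define β1¹ := {k ∈ I_GH : μ_k = 0}, β2¹ := {k ∈ I_GH : μ_k ≠ 0}, β1² := {k ∈ I_GH : ν_k ≠ 0}, β2² := {k ∈ I_GH : ν_k = 0}. If for some i ∈ {1, 2} the same multipliers satisfy the branch KKT equation ∇f(x̄) + Σ_{j∈I_g} λ_j ∇g_j(x̄) + Σ_{j=1}^p ρ_j ∇h_j(x̄) + Σ_{k∈I_G∪β1^i} μ_k ∇G_k(x̄) + Σ_{k∈I_H∪β2^i} ν_k ∇H_k(x̄) = 0, then x̄ is an S-stationary point of (MPSC). -/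
open Set Filter Topology Metric

noncomputable section

namespace MPSC

variable {n m p l : ℕ}

open scoped Classical in
lemma aux_sstat {n m p l : ℕ} (f : Vec n → ℝ) (g : Fin m → Vec n → ℝ)
    (h : Fin p → Vec n → ℝ) (G H : Fin l → Vec n → ℝ) (xb : Vec n)
    (lam : Fin m → ℝ) (ρ : Fin p → ℝ) (μ ν : Fin l → ℝ)
    (hlam0 : ∀ i, 0 ≤ lam i)
    (β1 β2 : Set (Fin l))
    (hβ1 : ∀ k ∈ β1, k ∈ IGH G H xb ∧ μ k = 0)
    (hβ2 : ∀ k ∈ β2, k ∈ IGH G H xb ∧ ν k = 0)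
    (heq : gradient f xb + sumOver (Ig g xb) (fun i => lam i • gradient (g i) xb) +
        ∑ j, ρ j • gradient (h j) xb +
        sumOver (IG G H xb ∪ β1) (fun k => μ k • gradient (G k) xb) +
        sumOver (IH G H xb ∪ β2) (fun k => ν k • gradient (H k) xb) = 0) :
    SStationary f g h G H xb := by
  refine ⟨fun i => if i ∈ Ig g xb then lam i else 0, ρ,
    fun k => if k ∈ IG G H xb ∪ β1 then μ k else 0,
    fun k => if k ∈ IH G H xb ∪ β2 then ν k else 0, ?_, ?_, ?_, ?_, ?_⟩
  · intro i; dsimp only; split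
    · exact hlam0 i
    · exact le_refl 0
  · intro i; dsimp only; split_ifs with h'
    · have : g i xb = 0 := h'
      rw [this, mul_zero]
    · rw [zero_mul]
  · intro k hk; dsimp only; split_ifs with h'
    · rcases h' with h' | h'
      · exfalso
        rcases hk with hk | hk
        · exact h'.2 hk.2
        · exact h'.2 hk.2
      · exact (hβ1 k h').2
    · rfl
  · intro k hk; dsimp only; split_ifs with h'
    · rcases h' with h' | h'
      · exfalso
        rcases hk with hk | hk
        · exact h'.1 hk.1
        · exact h'.1 hk.1
      · exact (hβ2 k h').2
    · rfl
  · have : (∀ i, (if i ∈ Ig g xb then lam i else 0) • gradient (g i) xb =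
        if i ∈ Ig g xb then lam i • gradient (g i) xb else 0) := by
      intro i; split <;> simp
    simpa [sumOver, ite_smul, zero_smul] using heq

theorem mstationary_branch_kkt_implies_sstationary {n m p l : ℕ} (f : Vec n → ℝ) (g : Fin m → Vec n → ℝ)
    (h : Fin p → Vec n → ℝ) (G H : Fin l → Vec n → ℝ)
    (hf : ContDiff ℝ 2 f) (hg : ∀ i, ContDiff ℝ 2 (g i)) (hh : ∀ j, ContDiff ℝ 2 (h j))
    (hG : ∀ k, ContDiff ℝ 2 (G k)) (hH : ∀ k, ContDiff ℝ 2 (H k))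
    (xb : Vec n) (hxb : xb ∈ Feas g h G H)
    (lam : Fin m → ℝ) (ρ : Fin p → ℝ) (μ ν : Fin l → ℝ)
    (hM : MStationarySystem f g h G H xb lam ρ μ ν)
    (hKKT :
      (gradient f xb + sumOver (Ig g xb) (fun i => lam i • gradient (g i) xb) +
        ∑ j, ρ j • gradient (h j) xb +
        sumOver (IG G H xb ∪ {k | k ∈ IGH G H xb ∧ μ k = 0})
          (fun k => μ k • gradient (G k) xb) +
        sumOver (IH G H xb ∪ {k | k ∈ IGH G H xb ∧ μ k ≠ 0})
          (fun k => ν k • gradient (H k) xb) = 0) ∨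
      (gradient f xb + sumOver (Ig g xb) (fun i => lam i • gradient (g i) xb) +
        ∑ j, ρ j • gradient (h j) xb +
        sumOver (IG G H xb ∪ {k | k ∈ IGH G H xb ∧ ν k ≠ 0})
          (fun k => μ k • gradient (G k) xb) +
        sumOver (IH G H xb ∪ {k | k ∈ IGH G H xb ∧ ν k = 0})
          (fun k => ν k • gradient (H k) xb) = 0)) :
    SStationary f g h G H xb := by
  obtain ⟨hlam0, hcomp, hμIH, hνIG, hμν, _⟩ := hM
  rcases hKKT with hk | hk
  · exact aux_sstat f g h G H xb lam ρ μ ν hlam0 _ _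
      (fun k hks => ⟨hks.1, hks.2⟩)
      (fun k hks => ⟨hks.1, by
        have := hμν k hks.1
        exact (mul_eq_zero.mp this).resolve_left hks.2⟩) hk
  · exact aux_sstat f g h G H xb lam ρ μ ν hlam0 _ _
      (fun k hks => ⟨hks.1, by
        have := hμν k hks.1
        exact (mul_eq_zero.mp this).resolve_right hks.2⟩)
      (fun k hks => ⟨hks.1, hks.2⟩) hk

end MPSC
end
end

section
/- Let x̄ ∈ F be a locally optimal solution of (MPSC) and assume MPSC-SSOCQ holds at x̄. Then x̄ is an M-stationary point of (MPSC). -/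
open Set Filter Topology Metric

noncomputable section

/-!
Under SSOCQ every nonzero direction `d` of the MPSC linearization cone is the initial velocity of
a feasible arc, so local optimality forces `∇f(x̄)ᵀd ≥ 0` on that cone. In particular this holds on
the linearization cone of the branch in which `G_k` vanishes for every `k ∈ I_GH`. That cone is
polyhedral, so Farkas' lemma produces multipliers for this branch; they have `ν_k = 0` on `I_GH`,
hence are M-stationary. Farkas' lemma is obtained from the separation theorem for closed convex
cones, the closedness of a finitely generated cone coming from Carathéodory's theorem for cones.
-/

open scoped RealInnerProductSpace

theorem exists_pos_of_not_linearIndepOn_finset {E ι : Type*} [AddCommGroup E] [Module ℝ E]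
    {w : ι → E} {t : Finset ι} (ht : ¬LinearIndepOn ℝ w t) :
    ∃ d : ι → ℝ, ∑ i ∈ t, d i • w i = 0 ∧ ∃ i ∈ t, 0 < d i := by
  obtain ⟨d, hd, i, hi, hdi⟩ := not_linearIndepOn_finset_iff.mp ht
  rcases hdi.lt_or_gt with hneg | hpos
  · exact ⟨-d, by simp [Finset.sum_neg_distrib, hd], i, hi, by simpa using hneg⟩
  · exact ⟨d, hd, i, hi, hpos⟩

namespace PointedCone

variable {E ι : Type*}

section Module

variable [AddCommGroup E] [Module ℝ E] {w : ι → E} {t : Finset ι} {x : E}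

theorem mem_hull_image_finset_iff :
    x ∈ hull ℝ (w '' t) ↔ ∃ c : ι → ℝ, (∀ i ∈ t, 0 ≤ c i) ∧ ∑ i ∈ t, c i • w i = x := by
  rw [Submodule.mem_span_image_finset_iff_exists_fun']
  constructor
  · rintro ⟨c, rfl⟩
    exact ⟨fun i => c i, fun i _ => (c i).2, rfl⟩
  · rintro ⟨c, hc, rfl⟩
    refine ⟨fun i => ⟨max (c i) 0, le_max_right _ _⟩, Finset.sum_congr rfl fun i hi => ?_⟩
    rw [Nonneg.mk_smul, max_eq_left (hc i hi)]

theorem mem_hull_range_iff [Fintype ι] :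
    x ∈ hull ℝ (range w) ↔ ∃ c : ι → ℝ, (∀ i, 0 ≤ c i) ∧ ∑ i, c i • w i = x := by
  rw [← image_univ, ← Finset.coe_univ, mem_hull_image_finset_iff]
  simp only [Finset.mem_univ, forall_const]

/-- Moving the coefficients along a linear dependency until the first one vanishes drops a
generator. -/
theorem exists_mem_hull_image_erase [DecidableEq ι] (hx : x ∈ hull ℝ (w '' t))
    (ht : ¬LinearIndepOn ℝ w t) : ∃ i ∈ t, x ∈ hull ℝ (w '' ↑(t.erase i)) := by
  obtain ⟨c, hc, rfl⟩ := mem_hull_image_finset_iff.mp hx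
  obtain ⟨d, hd, hpos⟩ := exists_pos_of_not_linearIndepOn_finset ht
  obtain ⟨i₀, hi₀, hmin⟩ := Finset.exists_min_image (t.filter fun i => 0 < d i)
    (fun i => c i / d i) (by simpa [Finset.filter_nonempty_iff] using hpos)
  obtain ⟨hi₀t, hdi₀⟩ := Finset.mem_filter.mp hi₀
  set r := c i₀ / d i₀
  have hr : 0 ≤ r := div_nonneg (hc i₀ hi₀t) hdi₀.le
  have hc' : ∀ i ∈ t, 0 ≤ c i - r * d i := by
    intro i hi
    rcases lt_or_ge 0 (d i) with hdi | hdi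
    · have := hmin i (Finset.mem_filter.mpr ⟨hi, hdi⟩)
      rw [le_div_iff₀ hdi] at this
      linarith
    · nlinarith [hc i hi]
  have hsum : ∑ i ∈ t, (c i - r * d i) • w i = ∑ i ∈ t, c i • w i := by
    simp only [sub_smul, mul_smul, Finset.sum_sub_distrib, ← Finset.smul_sum, hd, smul_zero,
      sub_zero]
  refine ⟨i₀, hi₀t, mem_hull_image_finset_iff.mpr
    ⟨fun i => c i - r * d i, fun i hi => hc' i (Finset.mem_of_mem_erase hi), ?_⟩⟩
  rw [Finset.sum_erase _ (by simp [r, div_mul_cancel₀ _ hdi₀.ne']), hsum]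

/-- Carathéodory's theorem for cones. -/
theorem exists_linearIndepOn_mem_hull_image [DecidableEq ι] (hx : x ∈ hull ℝ (w '' t)) :
    ∃ s ⊆ t, LinearIndepOn ℝ w s ∧ x ∈ hull ℝ (w '' s) := by
  induction t using Finset.strongInduction with
  | H t ih =>
    by_cases ht : LinearIndepOn ℝ w t
    · exact ⟨t, subset_rfl, ht, hx⟩
    obtain ⟨i, hi, hxi⟩ := exists_mem_hull_image_erase hx ht
    obtain ⟨s, hs, hsw, hxs⟩ := ih _ (Finset.erase_ssubset hi) hxi
    exact ⟨s, hs.trans (Finset.erase_subset i t), hsw, hxs⟩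

end Module

variable [NormedAddCommGroup E] [NormedSpace ℝ E]

theorem isClosed_hull_image_of_linearIndepOn {w : ι → E} {t : Finset ι}
    (hw : LinearIndepOn ℝ w t) : IsClosed (hull ℝ (w '' t) : Set E) := by
  set L := Fintype.linearCombination ℝ (fun i : t => w i)
  have hL : IsClosedEmbedding L := LinearMap.isClosedEmbedding_of_injective
    (LinearMap.ker_eq_bot.mpr (linearIndependent_iff_injective_fintypeLinearCombination.mp hw))
  have hcone : (hull ℝ (w '' t) : Set E) = L '' Ici 0 := by
    ext x
    rw [SetLike.mem_coe, Submodule.mem_span_image_finset_iff_exists_fun]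
    constructor
    · rintro ⟨c, rfl⟩
      exact ⟨fun i => c i, fun i => (c i).2, Fintype.linearCombination_apply ..⟩
    · rintro ⟨c, hc, rfl⟩
      exact ⟨fun i => ⟨c i, hc i⟩, (Fintype.linearCombination_apply ..).symm⟩
  rw [hcone]
  exact hL.isClosedMap _ isClosed_Ici

theorem isClosed_hull_range [Finite ι] [FiniteDimensional ℝ E] (w : ι → E) :
    IsClosed (hull ℝ (range w) : Set E) := by
  classical
  have := Fintype.ofFinite ι
  have hunion : (hull ℝ (range w) : Set E) =
      ⋃ t ∈ {t : Finset ι | LinearIndepOn ℝ w t}, (hull ℝ (w '' t) : Set E) := by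
    refine subset_antisymm (fun x hx => ?_) (iUnion₂_subset fun t _ => Submodule.span_mono ?_)
    · rw [← image_univ, ← Finset.coe_univ] at hx
      obtain ⟨t, -, ht, hxt⟩ := exists_linearIndepOn_mem_hull_image hx
      exact mem_biUnion ht hxt
    · exact image_subset_range w t
  rw [hunion]
  exact (toFinite _).isClosed_biUnion fun t ht => isClosed_hull_image_of_linearIndepOn ht

end PointedCone

section Farkas

variable {E ι κ : Type*} [NormedAddCommGroup E] [InnerProductSpace ℝ E] [FiniteDimensional ℝ E]
  [Fintype ι] [Fintype κ]

/-- **Farkas' lemma**. -/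
theorem exists_nonneg_sum_smul_eq_of_forall_inner_nonneg {w : ι → E} {b : E}
    (h : ∀ y, (∀ i, 0 ≤ ⟪w i, y⟫) → 0 ≤ ⟪b, y⟫) :
    ∃ c : ι → ℝ, (∀ i, 0 ≤ c i) ∧ ∑ i, c i • w i = b := by
  let C : ProperCone ℝ E := ⟨PointedCone.hull ℝ (range w), PointedCone.isClosed_hull_range w⟩
  by_cases hb : b ∈ C
  · exact PointedCone.mem_hull_range_iff.mp hb
  obtain ⟨y, hCy, hby⟩ := C.hyperplane_separation' hb
  exact absurd (h y fun i => hCy _ (PointedCone.subset_hull (mem_range_self i))) hby.not_ge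

/-- Farkas' lemma in the shape of the KKT conditions. -/
theorem exists_multipliers_of_forall_inner_nonneg {a : ι → E} {e : κ → E} {b : E}
    (h : ∀ y, (∀ i, ⟪a i, y⟫ ≤ 0) → (∀ j, ⟪e j, y⟫ = 0) → 0 ≤ ⟪b, y⟫) :
    ∃ c : ι → ℝ, (∀ i, 0 ≤ c i) ∧ ∃ ρ : κ → ℝ, b + ∑ i, c i • a i + ∑ j, ρ j • e j = 0 := by
  obtain ⟨c, hc, hsum⟩ := exists_nonneg_sum_smul_eq_of_forall_inner_nonneg
    (w := Sum.elim (-a) (Sum.elim e (-e))) (b := b) fun y hy => by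
      refine h y (fun i => ?_) (fun j => ?_)
      · simpa [inner_neg_left] using hy (.inl i)
      · have h₁ := hy (.inr (.inl j))
        have h₂ := hy (.inr (.inr j))
        simp only [Sum.elim_inr, Sum.elim_inl, Pi.neg_apply, inner_neg_left] at h₁ h₂
        linarith
  refine ⟨c ∘ .inl, fun i => hc _, fun j => c (.inr (.inr j)) - c (.inr (.inl j)), ?_⟩
  rw [← hsum]
  simp only [Fintype.sum_sum_type, Sum.elim_inl, Sum.elim_inr, Pi.neg_apply, smul_neg,
    Finset.sum_neg_distrib, sub_smul, Finset.sum_sub_distrib, Function.comp_apply]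
  abel

end Farkas

theorem Finset.sum_indicator_smul_comm {α R M : Type*} [Fintype α] [Semiring R]
    [AddCommMonoid M] [Module R M] (s : Set α) (r : α → R) (v : α → M) :
    ∑ a, s.indicator r a • v a = ∑ a, r a • s.indicator v a := by
  simp only [← indicator_smul_apply_left, indicator_smul_apply]

theorem IsLocalMinOn.hasDerivWithinAt_Ico_nonneg {φ : ℝ → ℝ} {a b φ' : ℝ} (hab : a < b)
    (hmin : IsLocalMinOn φ (Ico a b) a) (hφ : HasDerivWithinAt φ φ' (Ico a b) a) : 0 ≤ φ' := by
  have h1 : (1 : ℝ) ∈ posTangentConeAt (Ico a b) a :=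
    one_mem_posTangentConeAt_iff_frequently.mpr
      (eventually_of_mem (Ioo_mem_nhdsGT hab) fun _ hx => Ioo_subset_Ico_self hx).frequently
  simpa using hmin.hasFDerivWithinAt_nonneg hφ.hasFDerivWithinAt h1

theorem IsLocalMinOn.fderiv_nonneg_of_hasDerivWithinAt {E : Type*} [NormedAddCommGroup E]
    [NormedSpace ℝ E] {f : E → ℝ} {S : Set E} {x d : E} {ξ : ℝ → E} {δ : ℝ}
    (hmin : IsLocalMinOn f S x) (hf : DifferentiableAt ℝ f x) (hδ : 0 < δ) (hξ₀ : ξ 0 = x)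
    (hξ : HasDerivWithinAt ξ d (Ico 0 δ) 0) (hξS : MapsTo ξ (Ico 0 δ) S) :
    0 ≤ fderiv ℝ f x d := by
  subst hξ₀
  have hlim := hξ.continuousWithinAt.tendsto_nhdsWithin hξS
  exact IsLocalMinOn.hasDerivWithinAt_Ico_nonneg (φ := f ∘ ξ) hδ (hlim.eventually hmin)
    (hf.hasFDerivAt.comp_hasDerivWithinAt 0 hξ)

namespace MPSC

section Branch

variable {n m p l : ℕ} {f : Vec n → ℝ} {g : Fin m → Vec n → ℝ} {h : Fin p → Vec n → ℝ}
  {G H : Fin l → Vec n → ℝ} {xb : Vec n} {β1 β2 : Set (Fin l)}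

theorem LocallyOptimal.isLocalMinOn (hopt : LocallyOptimal f g h G H xb) :
    IsLocalMinOn f (Feas g h G H) xb := by
  obtain ⟨-, ε, hε, hmin⟩ := hopt
  filter_upwards [inter_mem_nhdsWithin _ (Metric.ball_mem_nhds xb hε)] with x ⟨hxF, hxε⟩
  exact hmin x hxF (by rwa [Metric.mem_ball, dist_eq_norm] at hxε)

theorem SSOCQ.fderiv_nonneg_of_mem_lCone (hcq : SSOCQ g h G H xb)
    (hmin : IsLocalMinOn f (Feas g h G H) xb) (hf : DifferentiableAt ℝ f xb) {d : Vec n}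
    (hd : d ∈ LCone g h G H xb) : 0 ≤ fderiv ℝ f xb d := by
  rcases eq_or_ne d 0 with rfl | hd₀
  · simp
  obtain ⟨δ, hδ, -, -, -, -, ξ, ξ', harc, hfeas, hξ₀, hξ'₀, -⟩ := hcq d hd hd₀
  exact hmin.fderiv_nonneg_of_hasDerivWithinAt hf hδ hξ₀
    (hξ'₀ ▸ harc.1 0 ⟨le_rfl, hδ⟩) hfeas

theorem branchLCone_subset_lCone (hβ : Partition G H xb β1 β2) :
    BranchLCone g h G H xb β1 β2 ⊆ LCone g h G H xb := by
  rintro d ⟨hg, hh, hG, hH⟩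
  refine ⟨hg, hh, fun k hk => hG k (.inl hk), fun k hk => hH k (.inl hk), fun k hk => ?_⟩
  rcases hβ.2 ▸ hk with hk | hk
  · rw [hG k (.inr hk), zero_mul]
  · rw [hH k (.inr hk), mul_zero]

theorem exists_branch_multipliers
    (hf : ∀ d ∈ BranchLCone g h G H xb β1 β2, 0 ≤ fderiv ℝ f xb d) :
    ∃ (lam : Fin m → ℝ) (ρ : Fin p → ℝ) (μ ν : Fin l → ℝ),
      (∀ i, 0 ≤ lam i) ∧ (∀ i ∉ Ig g xb, lam i = 0) ∧
      (∀ k ∉ IG G H xb ∪ β1, μ k = 0) ∧ (∀ k ∉ IH G H xb ∪ β2, ν k = 0) ∧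
      gradient f xb + ∑ i, lam i • gradient (g i) xb + ∑ j, ρ j • gradient (h j) xb +
        ∑ k, μ k • gradient (G k) xb + ∑ k, ν k • gradient (H k) xb = 0 := by
  set Bg := IG G H xb ∪ β1
  set Bh := IH G H xb ∪ β2
  obtain ⟨c, hc, ρ, hsum⟩ := exists_multipliers_of_forall_inner_nonneg
    (a := (Ig g xb).indicator fun i => gradient (g i) xb)
    (e := Sum.elim (fun j => gradient (h j) xb) (Sum.elim (Bg.indicator fun k => gradient (G k) xb)
      (Bh.indicator fun k => gradient (H k) xb)))
    (b := gradient f xb) fun y hineq heq => by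
      rw [inner_gradient_left]
      refine hf y ⟨fun i hi => ?_, fun j => ?_, fun k hk => ?_, fun k hk => ?_⟩
      · simpa [indicator_of_mem hi, inner_gradient_left] using hineq i
      · simpa [inner_gradient_left] using heq (.inl j)
      · simpa [indicator_of_mem (show k ∈ Bg from hk), inner_gradient_left]
          using heq (.inr (.inl k))
      · simpa [indicator_of_mem (show k ∈ Bh from hk), inner_gradient_left]
          using heq (.inr (.inr k))
  refine ⟨(Ig g xb).indicator c, ρ ∘ .inl, Bg.indicator (ρ ∘ .inr ∘ .inl),
    Bh.indicator (ρ ∘ .inr ∘ .inr), indicator_nonneg fun i _ => hc i,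
    fun i hi => indicator_of_notMem hi _, fun k hk => indicator_of_notMem hk _,
    fun k hk => indicator_of_notMem hk _, ?_⟩
  simp only [Fintype.sum_sum_type, Sum.elim_inl, Sum.elim_inr] at hsum
  simp only [Finset.sum_indicator_smul_comm, Function.comp_apply]
  rw [← hsum]
  abel

theorem mStationarySystem_of_branch (hβ : Partition G H xb β1 β2)
    {lam : Fin m → ℝ} {ρ : Fin p → ℝ} {μ ν : Fin l → ℝ} (hlam : ∀ i, 0 ≤ lam i)
    (hlam₀ : ∀ i ∉ Ig g xb, lam i = 0) (hμ₀ : ∀ k ∉ IG G H xb ∪ β1, μ k = 0)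
    (hν₀ : ∀ k ∉ IH G H xb ∪ β2, ν k = 0)
    (hgrad : gradient f xb + ∑ i, lam i • gradient (g i) xb + ∑ j, ρ j • gradient (h j) xb +
      ∑ k, μ k • gradient (G k) xb + ∑ k, ν k • gradient (H k) xb = 0) :
    MStationarySystem f g h G H xb lam ρ μ ν := by
  have hβGH : ∀ k ∈ β1 ∪ β2, k ∈ IGH G H xb := fun k hk => hβ.2 ▸ hk
  refine ⟨hlam, fun i => ?_, fun k hk => hμ₀ k ?_, fun k hk => hν₀ k ?_, fun k hk => ?_, hgrad⟩
  · by_cases hi : i ∈ Ig g xb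
    · rw [show g i xb = 0 from hi, mul_zero]
    · rw [hlam₀ i hi, zero_mul]
  · rintro (hk' | hk')
    exacts [hk.1 hk'.1, hk.1 (hβGH k (.inl hk')).1]
  · rintro (hk' | hk')
    exacts [hk.2 hk'.2, hk.2 (hβGH k (.inr hk')).2]
  · by_cases hk₁ : k ∈ β1
    · have hk₂ : k ∉ β2 := fun hk₂ => (hβ.1 ▸ mem_inter hk₁ hk₂ : k ∈ (∅ : Set (Fin l)))
      rw [hν₀ k (by rintro (hk' | hk'); exacts [hk'.1 hk.1, hk₂ hk']), mul_zero]
    · rw [hμ₀ k (by rintro (hk' | hk'); exacts [hk'.2 hk.2, hk₁ hk']), zero_mul]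

end Branch

theorem local_opt_ssocq_implies_mstationary_general {n m p l : ℕ} (f : Vec n → ℝ) (g : Fin m → Vec n → ℝ)
    (h : Fin p → Vec n → ℝ) (G H : Fin l → Vec n → ℝ)
    (hf : ContDiff ℝ 2 f)
    (xb : Vec n)
    (hopt : LocallyOptimal f g h G H xb) (hcq : SSOCQ g h G H xb) :
    MStationary f g h G H xb := by
  have hβ : Partition G H xb (IGH G H xb) ∅ := ⟨inter_empty _, union_empty _⟩
  have hfb : ∀ d ∈ BranchLCone g h G H xb (IGH G H xb) ∅, 0 ≤ fderiv ℝ f xb d := fun d hd =>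
    hcq.fderiv_nonneg_of_mem_lCone hopt.isLocalMinOn (hf.differentiable two_ne_zero xb)
      (branchLCone_subset_lCone hβ hd)
  obtain ⟨lam, ρ, μ, ν, hlam, hlam₀, hμ₀, hν₀, hgrad⟩ := exists_branch_multipliers hfb
  exact ⟨lam, ρ, μ, ν, mStationarySystem_of_branch hβ hlam hlam₀ hμ₀ hν₀ hgrad⟩

theorem local_opt_ssocq_implies_mstationary {n m p l : ℕ} (f : Vec n → ℝ) (g : Fin m → Vec n → ℝ)
    (h : Fin p → Vec n → ℝ) (G H : Fin l → Vec n → ℝ)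
    (hf : ContDiff ℝ 2 f) (hg : ∀ i, ContDiff ℝ 2 (g i)) (hh : ∀ j, ContDiff ℝ 2 (h j))
    (hG : ∀ k, ContDiff ℝ 2 (G k)) (hH : ∀ k, ContDiff ℝ 2 (H k))
    (xb : Vec n) (hxb : xb ∈ Feas g h G H)
    (hopt : LocallyOptimal f g h G H xb) (hcq : SSOCQ g h G H xb) :
    MStationary f g h G H xb :=
  local_opt_ssocq_implies_mstationary_general f g h G H hf xb hopt hcq

end MPSC
end
end
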